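/- arXiv:1812.06142 — 7 statements merged into one kernel-verified Lean document; each statement's English description precedes it below -/
import Mathlib

section
/- Let q > 1 and α > 0. Suppose f : [0,∞) → [0,∞) is continuous and satisfies f(t₂) + ∫_{2t₁}^{t₂} f(s) ds ≤ α·( f(t₁) + f(0)/(1 + t₁^q) ) for all real t₁, t₂ with 0 ≤ 2t₁ ≤ t₂. Then there exists a constant C > 0, depending only on α and q, such that f(t) ≤ C·f(0)/(1 + t^q) for all t ≥ 0. -/
open MeasureTheory Set

private lemma inv_le_K_inv {X Y K : ℝ} (hX : 0 < X) (hY : 0 < Y) (h : Y ≤ K * X) :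
    X⁻¹ ≤ K * Y⁻¹ := by
  rw [← one_div, ← one_div, mul_one_div, div_le_div_iff₀ hX hY, one_mul]
  exact h

set_option maxHeartbeats 2000000 in
private lemma aux (q α : ℝ) (hq : 1 < q) (hα : 0 < α) (n : ℕ) :
    ∃ C : ℝ, 0 < C ∧
      ∀ f : ℝ → ℝ,
        ContinuousOn f (Ici 0) →
        (∀ t ∈ Ici (0 : ℝ), 0 ≤ f t) →
        (∀ t₁ t₂ : ℝ, 0 ≤ 2 * t₁ → 2 * t₁ ≤ t₂ →
          f t₂ + ∫ s in (2 * t₁)..t₂, f s ≤ α * (f t₁ + f 0 / (1 + t₁ ^ q))) →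
        ∀ t : ℝ, 0 ≤ t → f t ≤ C * f 0 * (((1+t)^n)⁻¹ + (1 + t ^ q)⁻¹) := by
  have hq0 : (0:ℝ) < q := by linarith
  -- global bound
  have hbdd : ∀ f : ℝ → ℝ, (∀ t ∈ Ici (0 : ℝ), 0 ≤ f t) →
      (∀ t₁ t₂ : ℝ, 0 ≤ 2 * t₁ → 2 * t₁ ≤ t₂ →
        f t₂ + ∫ s in (2 * t₁)..t₂, f s ≤ α * (f t₁ + f 0 / (1 + t₁ ^ q))) →
      ∀ t : ℝ, 0 ≤ t → f t ≤ 2 * α * f 0 := by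
    intro f hpos hineq t ht
    have h := hineq 0 t (by norm_num) (by linarith)
    have hz : (0:ℝ) ^ q = 0 := Real.zero_rpow (by linarith)
    rw [hz] at h
    have hint : 0 ≤ ∫ s in (2*(0:ℝ))..t, f s := by
      apply intervalIntegral.integral_nonneg (by linarith)
      intro u hu
      exact hpos u (le_trans (by norm_num) hu.1)
    have : f 0 / (1 + 0) = f 0 := by norm_num
    rw [this] at h
    linarith
  induction n with
  | zero =>
    refine ⟨2*α + 1, by linarith, fun f hcont hpos hineq t ht => ?_⟩
    have hf0 : 0 ≤ f 0 := hpos 0 Set.self_mem_Ici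
    have htq : 0 ≤ t ^ q := Real.rpow_nonneg ht q
    have hQ : 0 < 1 + t ^ q := by linarith
    have hb := hbdd f hpos hineq t ht
    have h1 : (0:ℝ) ≤ (1 + t ^ q)⁻¹ := by positivity
    simp only [pow_zero, inv_one]
    nlinarith [mul_nonneg (mul_nonneg (show (0:ℝ) ≤ 2*α+1 by linarith) hf0) h1]
  | succ n ih =>
    obtain ⟨C, hC, hCf⟩ := ih
    refine ⟨4*α + 8*α^2*C*8^n + (4*α^2*(C+1)*8^q + α*4^q), by positivity,
      fun f hcont hpos hineq t ht => ?_⟩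
    set C' : ℝ := 4*α + 8*α^2*C*8^n + (4*α^2*(C+1)*8^q + α*4^q) with hC'def
    have hf0 : 0 ≤ f 0 := hpos 0 Set.self_mem_Ici
    have htq : 0 ≤ t ^ q := Real.rpow_nonneg ht q
    have hQ : 0 < 1 + t ^ q := by linarith
    have hQi : (0:ℝ) ≤ (1 + t ^ q)⁻¹ := by positivity
    have hPi : (0:ℝ) ≤ ((1+t)^(n+1))⁻¹ := by positivity
    have h8q : (1:ℝ) ≤ 8 ^ q := by
      calc (1:ℝ) = 1 ^ q := (Real.one_rpow q).symm
      _ ≤ 8 ^ q := Real.rpow_le_rpow (by norm_num) (by norm_num) (le_of_lt hq0)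
    have h4q : (1:ℝ) ≤ 4 ^ q := by
      calc (1:ℝ) = 1 ^ q := (Real.one_rpow q).symm
      _ ≤ 4 ^ q := Real.rpow_le_rpow (by norm_num) (by norm_num) (le_of_lt hq0)
    have h8n : (0:ℝ) < 8^n := by positivity
    rcases le_or_gt t 1 with ht1 | ht1
    · -- small t: use the global bound
      have hb := hbdd f hpos hineq t ht
      have htq1 : t ^ q ≤ 1 := Real.rpow_le_one ht ht1 (le_of_lt hq0)
      have hQ2 : (1:ℝ)/2 ≤ (1 + t ^ q)⁻¹ := by
        rw [div_le_iff₀ (by norm_num), ← one_div, div_mul_eq_mul_div, le_div_iff₀ hQ]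
        linarith
      have hCge : 4*α ≤ C' := by
        have p1 : (0:ℝ) ≤ 8*α^2*C*8^n := by positivity
        have p2 : (0:ℝ) ≤ 4*α^2*(C+1)*8^q := by positivity
        have p3 : (0:ℝ) ≤ α*4^q := by positivity
        linarith
      nlinarith [mul_nonneg (mul_nonneg (show (0:ℝ) ≤ C'-4*α by linarith) hf0) hQi,
        mul_nonneg (mul_nonneg hα.le hf0) (show (0:ℝ) ≤ (1+t^q)⁻¹ - 1/2 by linarith),
        mul_nonneg (mul_nonneg (show (0:ℝ) ≤ C' by linarith) hf0) hPi]
    · -- large t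
      have ht0 : (0:ℝ) < t := by linarith
      have ht8 : (0:ℝ) < t/8 := by linarith
      have ht8q : 0 ≤ (t/8) ^ q := Real.rpow_nonneg (by linarith) q
      have ht4q : 0 ≤ (t/4) ^ q := Real.rpow_nonneg (by linarith) q
      have hQ8 : 0 < 1 + (t/8) ^ q := by linarith
      have hQ4 : 0 < 1 + (t/4) ^ q := by linarith
      have hP8 : 0 < (1 + t/8 : ℝ)^n := by positivity
      -- step 1: integral bound on [t/4, t/2]
      have h1 := hineq (t/8) (t/2) (by linarith) (by linarith)
      have e28 : 2*(t/8) = t/4 := by ring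
      rw [e28] at h1
      have hab : t/4 ≤ t/2 := by linarith
      have hsub : Icc (t/4) (t/2) ⊆ Ici (0:ℝ) := fun x hx => le_trans (by linarith) hx.1
      have hfc : ContinuousOn f (Icc (t/4) (t/2)) := hcont.mono hsub
      obtain ⟨s, hs, hmin⟩ := isCompact_Icc.exists_isMinOn (nonempty_Icc.mpr hab) hfc
      have hfint : IntervalIntegrable f volume (t/4) (t/2) := by
        apply ContinuousOn.intervalIntegrable
        rwa [Set.uIcc_of_le hab]
      have hconst : ∫ _ in (t/4)..(t/2), f s ≤ ∫ x in (t/4)..(t/2), f x :=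
        intervalIntegral.integral_mono_on hab intervalIntegrable_const hfint
          (fun x hx => isMinOn_iff.mp hmin x hx)
      have hconst' : f s * (t/4) ≤ ∫ x in (t/4)..(t/2), f x := by
        rw [intervalIntegral.integral_const] at hconst
        have e : (t/2 - t/4) • f s = f s * (t/4) := by
          simp only [smul_eq_mul]; ring
        linarith [e ▸ hconst]
      have hft2 : 0 ≤ f (t/2) := hpos _ (by simp only [Set.mem_Ici]; linarith)
      have hfs4 : f s * (t/4) ≤ α * (f (t/8) + f 0 / (1 + (t/8) ^ q)) := by linarith
      have hfs : f s ≤ 4/t * (α * (f (t/8) + f 0 / (1 + (t/8) ^ q))) := by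
        rw [div_mul_eq_mul_div, le_div_iff₀ ht0]
        nlinarith
      -- step 2: apply inequality with t₁ = s, t₂ = t
      have hs1 : t/4 ≤ s := hs.1
      have hs2 : s ≤ t/2 := hs.2
      have h2 := hineq s t (by linarith) (by linarith)
      have hint2 : 0 ≤ ∫ u in (2*s)..t, f u := by
        apply intervalIntegral.integral_nonneg (by linarith)
        intro u hu
        exact hpos u (le_trans (by linarith) hu.1)
      have hsq : 0 ≤ s ^ q := Real.rpow_nonneg (by linarith) q
      have hQs : 0 < 1 + s ^ q := by linarith
      have hsB : f 0 / (1 + s ^ q) ≤ f 0 / (1 + (t/4) ^ q) := by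
        gcongr
      have hft : f t ≤ α * f s + α * (f 0 / (1 + (t/4)^q)) := by
        have e := mul_le_mul_of_nonneg_left hsB hα.le
        have e2 : α * (f s + f 0 / (1 + s ^ q)) = α * f s + α * (f 0 / (1 + s ^ q)) := by
          ring
        linarith [h2, hint2, e, e2]
      have hD : f (t/8) ≤ C * f 0 * (((1+t/8)^n)⁻¹ + (1 + (t/8)^q)⁻¹) :=
        hCf f hcont hpos hineq (t/8) (by linarith)
      have hP8i : (0:ℝ) ≤ ((1+t/8:ℝ)^n)⁻¹ := by positivity
      have hfs' : f s ≤ 4/t * (α * (C * f 0 * (((1+t/8)^n)⁻¹ + (1 + (t/8)^q)⁻¹)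
          + f 0 / (1 + (t/8)^q))) := by
        refine hfs.trans ?_
        gcongr
      have hmain : f t ≤ 4*α^2*C*f 0*(t⁻¹ * ((1+t/8:ℝ)^n)⁻¹)
          + 4*α^2*(C+1)*f 0*(t⁻¹ * (1+(t/8)^q)⁻¹) + α*f 0*(1+(t/4)^q)⁻¹ := by
        have step : f t ≤ α * (4/t * (α * (C * f 0 * (((1+t/8)^n)⁻¹ + (1 + (t/8)^q)⁻¹)
            + f 0 / (1 + (t/8)^q)))) + α * (f 0 / (1 + (t/4)^q)) := by
          have := mul_le_mul_of_nonneg_left hfs' hα.le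
          linarith
        refine step.trans_eq ?_
        rw [div_eq_mul_inv (f 0), div_eq_mul_inv (f 0), div_eq_mul_inv (4:ℝ)]
        ring
      -- the three key estimates
      have k1 : t⁻¹ * ((1+t/8:ℝ)^n)⁻¹ ≤ 2*8^n * ((1+t)^(n+1))⁻¹ := by
        have hle : (1+t:ℝ)^(n+1) ≤ 2*8^n * (t * (1+t/8)^n) := by
          have e1 : (1+t:ℝ)^n ≤ 8^n * (1+t/8)^n := by
            calc (1+t:ℝ)^n ≤ (8*(1+t/8))^n := pow_le_pow_left₀ (by linarith) (by linarith) n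
            _ = 8^n * (1+t/8)^n := mul_pow 8 (1+t/8) n
          calc (1+t:ℝ)^(n+1) = (1+t) * (1+t)^n := by ring
          _ ≤ (2*t) * (8^n * (1+t/8)^n) :=
            mul_le_mul (by linarith) e1 (by positivity) (by linarith)
          _ = 2*8^n * (t*(1+t/8)^n) := by ring
        have h := inv_le_K_inv (by positivity : (0:ℝ) < t*(1+t/8)^n)
          (by positivity : (0:ℝ) < (1+t)^(n+1)) hle
        rwa [mul_inv] at h
      have k2 : (1+(t/8)^q)⁻¹ ≤ 8^q * (1+t^q)⁻¹ := by
        apply inv_le_K_inv hQ8 hQ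
        have e : (8:ℝ)^q * (t/8)^q = t^q := by
          rw [← Real.mul_rpow (by norm_num) (by linarith)]
          congr 1
          ring
        nlinarith
      have k2' : t⁻¹ * (1+(t/8)^q)⁻¹ ≤ 8^q * (1+t^q)⁻¹ := by
        have hti : t⁻¹ ≤ 1 := by
          rw [inv_le_one_iff₀]; right; linarith
        calc t⁻¹ * (1+(t/8)^q)⁻¹ ≤ 1 * (1+(t/8)^q)⁻¹ :=
          mul_le_mul_of_nonneg_right hti (by positivity)
        _ = (1+(t/8)^q)⁻¹ := one_mul _
        _ ≤ 8^q * (1+t^q)⁻¹ := k2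
      have k3 : (1+(t/4)^q)⁻¹ ≤ 4^q * (1+t^q)⁻¹ := by
        apply inv_le_K_inv hQ4 hQ
        have e : (4:ℝ)^q * (t/4)^q = t^q := by
          rw [← Real.mul_rpow (by norm_num) (by linarith)]
          congr 1
          ring
        nlinarith
      calc f t ≤ 4*α^2*C*f 0*(t⁻¹ * ((1+t/8:ℝ)^n)⁻¹)
          + 4*α^2*(C+1)*f 0*(t⁻¹ * (1+(t/8)^q)⁻¹) + α*f 0*(1+(t/4)^q)⁻¹ := hmain
        _ ≤ 4*α^2*C*f 0*(2*8^n * ((1+t)^(n+1))⁻¹)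
          + 4*α^2*(C+1)*f 0*(8^q * (1+t^q)⁻¹) + α*f 0*(4^q * (1+t^q)⁻¹) := by
          gcongr
        _ ≤ C' * f 0 * (((1+t)^(n+1))⁻¹ + (1 + t ^ q)⁻¹) := by
          nlinarith [mul_nonneg (mul_nonneg
              (show (0:ℝ) ≤ 4*α + 4*α^2*(C+1)*8^q + α*4^q by positivity) hf0) hPi,
            mul_nonneg (mul_nonneg
              (show (0:ℝ) ≤ 4*α + 8*α^2*C*8^n by positivity) hf0) hQi]

/-- Grönwall-type dyadic iteration lemma (Lemma 4.10 in the paper):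
a nonnegative continuous function on `[0,∞)` satisfying the integral inequality
with superpolynomial inhomogeneity decays at rate `(1+t^q)⁻¹`, with a constant
depending only on `α` and `q`. -/
theorem stmt0 (q α : ℝ) (hq : 1 < q) (hα : 0 < α) :
    ∃ C : ℝ, 0 < C ∧
      ∀ f : ℝ → ℝ,
        ContinuousOn f (Ici 0) →
        (∀ t ∈ Ici (0 : ℝ), 0 ≤ f t) →
        (∀ t₁ t₂ : ℝ, 0 ≤ 2 * t₁ → 2 * t₁ ≤ t₂ →
          f t₂ + ∫ s in (2 * t₁)..t₂, f s ≤ α * (f t₁ + f 0 / (1 + t₁ ^ q))) →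
        ∀ t : ℝ, 0 ≤ t → f t ≤ C * f 0 / (1 + t ^ q) := by
  obtain ⟨n, hn⟩ := exists_nat_ge q
  obtain ⟨C, hC, hCf⟩ := aux q α hq hα n
  refine ⟨5*C, by linarith, fun f hcont hpos hineq t ht => ?_⟩
  have hf0 : 0 ≤ f 0 := hpos 0 Set.self_mem_Ici
  have htq : 0 ≤ t ^ q := Real.rpow_nonneg ht q
  have hQ : 0 < 1 + t ^ q := by linarith
  have hP : (0:ℝ) < (1+t)^n := by positivity
  have key : ((1+t:ℝ)^n)⁻¹ ≤ 4 * (1+t^q)⁻¹ := by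
    apply inv_le_K_inv hP hQ
    have h1n : (1:ℝ) ≤ (1+t)^n := one_le_pow₀ (by linarith)
    rcases le_or_gt t 1 with ht1 | ht1
    · have : t ^ q ≤ 1 := Real.rpow_le_one ht ht1 (by linarith)
      linarith
    · have e1 : t ^ q ≤ t ^ (n:ℝ) :=
        Real.rpow_le_rpow_of_exponent_le (by linarith) hn
      have e2 : t ^ (n:ℝ) = t ^ n := Real.rpow_natCast t n
      have e3 : t ^ n ≤ (1+t)^n := pow_le_pow_left₀ (by linarith) (by linarith) n
      nlinarith
  have h := hCf f hcont hpos hineq t ht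
  have hCf0 : (0:ℝ) ≤ C * f 0 := by positivity
  rw [div_eq_mul_inv]
  calc f t ≤ C * f 0 * (((1+t)^n)⁻¹ + (1 + t ^ q)⁻¹) := h
    _ ≤ C * f 0 * (4 * (1+t^q)⁻¹ + (1 + t ^ q)⁻¹) := by
      apply mul_le_mul_of_nonneg_left _ hCf0
      linarith
    _ = 5*C * f 0 * (1 + t ^ q)⁻¹ := by ring
end

section
/- Let q > 1, α > 0 and D ≥ 0. Suppose f : [1,∞) → [0,∞) is continuous and satisfies f(v₂) + ∫_{v₁}^{v₂} f(s) ds ≤ α·( f(v₁) + D/(1 + v₁^q) ) for all v₁, v₂ with 1 ≤ v₁ ≤ v₂. Then there exists a constant C > 0, depending only on α and q, such that f(v) ≤ C·( f(1) + D )/(1 + v^q) for all v ≥ 1. -/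
open MeasureTheory Set

private lemma exists_dyadic (x : ℝ) (hx : 1 ≤ x) :
    ∃ n : ℕ, (2:ℝ)^n ≤ x ∧ x < 2^(n+1) := by
  have hm : 1 ≤ ⌊x⌋₊ := Nat.le_floor (by exact_mod_cast hx)
  refine ⟨Nat.log 2 ⌊x⌋₊, ?_, ?_⟩
  · have h1 : 2 ^ Nat.log 2 ⌊x⌋₊ ≤ ⌊x⌋₊ := Nat.pow_log_le_self 2 (by omega)
    have h2 : (⌊x⌋₊ : ℝ) ≤ x := Nat.floor_le (by linarith)
    calc (2:ℝ)^Nat.log 2 ⌊x⌋₊ = ((2^Nat.log 2 ⌊x⌋₊ : ℕ) : ℝ) := by push_cast; ring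
      _ ≤ (⌊x⌋₊ : ℝ) := by exact_mod_cast h1
      _ ≤ x := h2
  · have h1 : ⌊x⌋₊ < 2 ^ (Nat.log 2 ⌊x⌋₊ + 1) := Nat.lt_pow_succ_log_self (by norm_num) _
    have h2 : x < ⌊x⌋₊ + 1 := Nat.lt_floor_add_one x
    have h3 : (⌊x⌋₊:ℝ) + 1 ≤ (2:ℝ) ^ (Nat.log 2 ⌊x⌋₊ + 1) := by
      have : (⌊x⌋₊ + 1 : ℕ) ≤ 2 ^ (Nat.log 2 ⌊x⌋₊ + 1) := h1
      exact_mod_cast this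
    linarith

set_option maxHeartbeats 2000000 in
/-- Grönwall-type dyadic iteration lemma on `[1,∞)`:
a nonnegative continuous function satisfying the integral inequality with
inhomogeneity `D/(1+v₁^q)` decays like `(f(1)+D)/(1+v^q)`, with a constant
depending only on `α` and `q`. -/
theorem stmt1 (q α : ℝ) (hq : 1 < q) (hα : 0 < α) :
    ∃ C : ℝ, 0 < C ∧
      ∀ D : ℝ, 0 ≤ D →
      ∀ f : ℝ → ℝ,
        ContinuousOn f (Ici 1) →
        (∀ v ∈ Ici (1 : ℝ), 0 ≤ f v) →
        (∀ v₁ v₂ : ℝ, 1 ≤ v₁ → v₁ ≤ v₂ →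
          f v₂ + ∫ s in v₁..v₂, f s ≤ α * (f v₁ + D / (1 + v₁ ^ q))) →
        ∀ v : ℝ, 1 ≤ v → f v ≤ C * (f 1 + D) / (1 + v ^ q) := by
  have hq0 : (0:ℝ) ≤ q := by linarith
  have h2mono : ∀ {m k : ℕ}, m ≤ k → (2:ℝ)^m ≤ 2^k :=
    fun h => pow_le_pow_right₀ one_le_two h
  have h2pow1 : ∀ n : ℕ, (1:ℝ) ≤ 2^n := fun n => one_le_pow₀ one_le_two
  -- the dyadic weight P n = (2^n)^q
  set P : ℕ → ℝ := fun n => ((2:ℝ)^n) ^ q with hPdef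
  have hPpos : ∀ n, 0 < P n := fun n => Real.rpow_pos_of_pos (by positivity) q
  have hPone : ∀ n, 1 ≤ P n := by
    intro n
    calc (1:ℝ) = (1:ℝ)^q := (Real.one_rpow q).symm
      _ ≤ P n := Real.rpow_le_rpow zero_le_one (one_le_pow₀ one_le_two) hq0
  have hPsucc : ∀ n, P (n+1) = P n * (2:ℝ)^q := by
    intro n
    have h : ((2:ℝ)^(n+1)) = (2:ℝ)^n * 2 := by ring
    rw [hPdef]; simp only
    rw [h, Real.mul_rpow (by positivity) (by norm_num)]
  -- choose n₀ with 2^q * α < 2^n₀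
  obtain ⟨n₀, hn₀⟩ : ∃ n : ℕ, (2:ℝ)^q * α < 2 ^ n := pow_unbounded_of_one_lt _ one_lt_two
  -- the majorant recursion
  set M : ℕ → ℝ := fun n => Nat.rec α (fun k Mk => α / 2^(k+1) * (Mk + 1 / P k)) n with hMdef
  have hM0 : M 0 = α := rfl
  have hMsucc : ∀ n, M (n+1) = α / 2^(n+1) * (M n + 1 / P n) := fun n => rfl
  set K : ℝ := max (M n₀ * P n₀) 1 with hKdef
  have hK1 : (1:ℝ) ≤ K := le_max_right _ _
  have hKpos : (0:ℝ) < K := lt_of_lt_of_le one_pos hK1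
  have h2q : (0:ℝ) < (2:ℝ)^q := Real.rpow_pos_of_pos (by norm_num) q
  -- numeric decay of the majorant
  have hMK : ∀ n, n₀ ≤ n → M n ≤ K / P n := by
    intro n hn
    induction n, hn using Nat.le_induction with
    | base =>
      rw [le_div_iff₀ (hPpos n₀)]
      exact le_max_left _ _
    | succ n hn IH =>
      have h2n : (2:ℝ)^q * α < 2 ^ n := lt_of_lt_of_le hn₀ (h2mono hn)
      have hPn := hPpos n
      have hPn' := hPn.ne'
      have hMn : M (n+1) ≤ α / 2^(n+1) * (2 * K / P n) := by
        rw [hMsucc]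
        refine mul_le_mul_of_nonneg_left ?_ (by positivity)
        have h1p : 1 / P n ≤ K / P n := div_le_div_of_nonneg_right hK1 hPn.le
        calc M n + 1 / P n ≤ K / P n + K / P n := add_le_add IH h1p
          _ = 2 * K / P n := by ring
      refine hMn.trans ?_
      rw [hPsucc]
      have e1 : α / 2^(n+1) * (2*K/P n) = (2*α*K) / (2^(n+1) * P n) := by
        field_simp
      rw [e1, div_le_div_iff₀ (mul_pos (by positivity) hPn) (mul_pos hPn h2q)]
      have hh : ((2:ℝ)^q * α) * K * P n < (2^n) * K * P n :=
        mul_lt_mul_of_pos_right (mul_lt_mul_of_pos_right h2n hKpos) hPn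
      have e2 : (2:ℝ)^(n+1) = 2 * 2^n := by ring
      rw [e2]
      nlinarith [hh]
  -- the constant
  have h4q : (0:ℝ) < (4:ℝ)^q := Real.rpow_pos_of_pos (by norm_num) q
  set C₁ : ℝ := α * (1 + P (n₀+2)) with hC₁
  set C₂ : ℝ := 2 * α * (K + 1) * (4:ℝ)^q with hC₂
  have hC₁pos : 0 < C₁ := by
    have := hPone (n₀+2); nlinarith
  have hC₂pos : 0 < C₂ :=
    mul_pos (mul_pos (by linarith) (by linarith)) h4q
  refine ⟨C₁ + C₂, by linarith, ?_⟩
  intro D hD f hf hf0 hyp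
  have hf1 : 0 ≤ f 1 := hf0 1 self_mem_Ici
  have hfD : 0 ≤ f 1 + D := by linarith
  -- integrability on relevant intervals
  have hint : ∀ a b : ℝ, 1 ≤ a → 1 ≤ b → IntervalIntegrable f volume a b := by
    intro a b ha hb
    refine (hf.mono ?_).intervalIntegrable
    intro x hx
    exact le_trans (le_min ha hb) hx.1
  -- minimizer points on dyadic intervals
  have hex : ∀ n : ℕ, ∃ x ∈ Icc ((2:ℝ)^n) (2^(n+1)),
      IsMinOn f (Icc ((2:ℝ)^n) (2^(n+1))) x := by
    intro n
    refine isCompact_Icc.exists_isMinOn ⟨2^n, ?_⟩ (hf.mono ?_)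
    · exact ⟨le_refl _, h2mono (Nat.le_succ n)⟩
    · intro x hx; exact le_trans (h2pow1 n) hx.1
  choose t ht htmin using hex
  have ht1 : ∀ n, 1 ≤ t n := fun n => le_trans (h2pow1 n) (ht n).1
  -- min point value bounded by the mean
  have hmean : ∀ n : ℕ, f (t n) * 2^n ≤ ∫ s in (2:ℝ)^n..(2:ℝ)^(n+1), f s := by
    intro n
    have hab : (2:ℝ)^n ≤ 2^(n+1) := h2mono (Nat.le_succ n)
    have hconst : (∫ _ in (2:ℝ)^n..(2:ℝ)^(n+1), f (t n)) = (2^(n+1) - 2^n) * f (t n) := by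
      rw [intervalIntegral.integral_const]; simp [smul_eq_mul]
    have hmono : (∫ _ in (2:ℝ)^n..(2:ℝ)^(n+1), f (t n)) ≤ ∫ s in (2:ℝ)^n..(2:ℝ)^(n+1), f s := by
      apply intervalIntegral.integral_mono_on hab
        (intervalIntegrable_const) (hint _ _ (h2pow1 n) (h2pow1 (n+1)))
      intro x hx
      exact htmin n hx
    have h2 : (2:ℝ)^(n+1) - 2^n = 2^n := by ring
    rw [hconst, h2] at hmono
    linarith [hmono]
  -- iterated bound at the minimizer points
  have hbound : ∀ n, f (t n) ≤ M n * (f 1 + D) := by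
    intro n
    induction n with
    | zero =>
      have hm := hmean 0
      have h12 : ∫ s in (1:ℝ)..2, f s ≤ α * (f 1 + D / (1 + (1:ℝ)^q)) := by
        have := hyp 1 2 (le_refl 1) (by norm_num)
        have hf2 : 0 ≤ f 2 := hf0 2 (by norm_num)
        linarith
      have h1q : (1:ℝ)^q = 1 := Real.one_rpow q
      rw [h1q] at h12
      have : f (t 0) * 2^0 ≤ α * (f 1 + D / (1+1)) := by
        refine hm.trans ?_
        simpa using h12
      simp only [pow_zero, mul_one] at this
      rw [hM0]
      nlinarith
    | succ n IH =>
      have htle : t n ≤ 2^(n+1) := (ht n).2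
      have hup : (2:ℝ)^(n+1) ≤ 2^(n+2) := h2mono (Nat.le_succ (n+1))
      have hsplit : (∫ s in t n..(2:ℝ)^(n+2), f s)
          = (∫ s in t n..(2:ℝ)^(n+1), f s) + ∫ s in (2:ℝ)^(n+1)..(2:ℝ)^(n+2), f s := by
        rw [intervalIntegral.integral_add_adjacent_intervals
          (hint _ _ (ht1 n) (h2pow1 (n+1))) (hint _ _ (h2pow1 (n+1)) (h2pow1 (n+2)))]
      have hnn : 0 ≤ ∫ s in t n..(2:ℝ)^(n+1), f s := by
        apply intervalIntegral.integral_nonneg htle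
        intro x hx
        exact hf0 x (le_trans (ht1 n) hx.1)
      have hhyp := hyp (t n) (2^(n+2)) (ht1 n) (le_trans htle hup)
      have hf2 : 0 ≤ f (2^(n+2)) := hf0 _ (h2pow1 (n+2))
      have hI : (∫ s in (2:ℝ)^(n+1)..(2:ℝ)^(n+2), f s)
          ≤ α * (f (t n) + D / (1 + t n ^ q)) := by
        rw [hsplit] at hhyp
        linarith
      have hm := (hmean (n+1)).trans hI
      have hPn := hPpos n
      have htq : P n ≤ 1 + t n ^ q := by
        have h := Real.rpow_le_rpow (by positivity : (0:ℝ) ≤ 2^n) (ht n).1 hq0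
        have : P n ≤ t n ^ q := h
        linarith
      have h1t : (0:ℝ) < 1 + t n ^ q := lt_of_lt_of_le hPn htq
      have hDP : D / (1 + t n ^ q) ≤ D / P n := by
        rw [div_le_div_iff₀ h1t hPn]
        nlinarith [mul_nonneg hD (sub_nonneg.mpr htq)]
      have hDfD : D / P n ≤ (f 1 + D) * (1 / P n) := by
        rw [mul_one_div]
        exact div_le_div_of_nonneg_right (by linarith) hPn.le
      have h2p : (0:ℝ) < 2^(n+1) := by positivity
      rw [hMsucc]
      calc f (t (n+1)) ≤ (α * (f (t n) + D / (1 + t n ^ q))) / 2^(n+1) := by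
            rw [le_div_iff₀ h2p]; exact hm
        _ ≤ (α * (M n * (f 1 + D) + (f 1 + D) * (1 / P n))) / 2^(n+1) := by
            refine div_le_div_of_nonneg_right ?_ h2p.le
            refine mul_le_mul_of_nonneg_left ?_ hα.le
            have := hDP.trans hDfD
            linarith
        _ = α / 2^(n+1) * (M n + 1 / P n) * (f 1 + D) := by ring
  -- conclusion
  intro v hv
  have hv0 : (0:ℝ) < v := by linarith
  have hvq : (0:ℝ) ≤ v ^ q := Real.rpow_nonneg (by linarith) q
  have h1vq : (0:ℝ) < 1 + v ^ q := by linarith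
  rw [le_div_iff₀ h1vq]
  rcases le_or_gt v (2^(n₀+2)) with hcase | hcase
  · -- small v
    have hfv : f v ≤ α * (f 1 + D) := by
      have hh := hyp 1 v (le_refl 1) hv
      have hnn : 0 ≤ ∫ s in (1:ℝ)..v, f s := by
        apply intervalIntegral.integral_nonneg hv
        intro x hx; exact hf0 x hx.1
      have h1q : (1:ℝ)^q = 1 := Real.one_rpow q
      rw [h1q] at hh
      have : D / (1+1) ≤ D := by linarith
      nlinarith
    have hvP : v ^ q ≤ P (n₀+2) :=
      Real.rpow_le_rpow (by linarith) hcase hq0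
    calc f v * (1 + v ^ q) ≤ (α * (f 1 + D)) * (1 + P (n₀+2)) :=
          mul_le_mul hfv (by linarith) h1vq.le (mul_nonneg hα.le hfD)
      _ = C₁ * (f 1 + D) := by rw [hC₁]; ring
      _ ≤ (C₁ + C₂) * (f 1 + D) := by nlinarith [mul_nonneg hC₂pos.le hfD]
  · -- large v : find the dyadic scale
    obtain ⟨m, hm1, hm2⟩ := exists_dyadic v hv
    have hmn : n₀ + 2 < m + 1 := by
      by_contra h
      push_neg at h
      have : (2:ℝ)^(m+1) ≤ 2^(n₀+2) := h2mono h
      linarith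
    obtain ⟨n, rfl⟩ : ∃ n, m = n + 1 := ⟨m - 1, by omega⟩
    have hnn₀ : n₀ ≤ n := by omega
    have hPn := hPpos n
    have hPn' := hPn.ne'
    have hfv : f v ≤ α * (f (t n) + D / (1 + t n ^ q)) := by
      have hh := hyp (t n) v (ht1 n) (le_trans (ht n).2 hm1)
      have hnn : 0 ≤ ∫ s in t n..v, f s := by
        apply intervalIntegral.integral_nonneg (le_trans (ht n).2 hm1)
        intro x hx; exact hf0 x (le_trans (ht1 n) hx.1)
      linarith
    have htq : P n ≤ 1 + t n ^ q := by
      have h := Real.rpow_le_rpow (by positivity : (0:ℝ) ≤ 2^n) (ht n).1 hq0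
      have : P n ≤ t n ^ q := h
      linarith
    have h1t : (0:ℝ) < 1 + t n ^ q := lt_of_lt_of_le hPn htq
    have hDP : D / (1 + t n ^ q) ≤ D / P n := by
      rw [div_le_div_iff₀ h1t hPn]
      nlinarith [mul_nonneg hD (sub_nonneg.mpr htq)]
    have hDf : D / P n ≤ (f 1 + D) / P n :=
      div_le_div_of_nonneg_right (by linarith) hPn.le
    have hMn : f (t n) ≤ K / P n * (f 1 + D) :=
      (hbound n).trans (mul_le_mul_of_nonneg_right (hMK n hnn₀) hfD)
    have hA : f v ≤ α * (K + 1) * ((f 1 + D) / P n) := by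
      have h2 : D / (1 + t n ^ q) ≤ (f 1 + D) / P n := hDP.trans hDf
      calc f v ≤ α * (f (t n) + D / (1 + t n ^ q)) := hfv
        _ ≤ α * (K / P n * (f 1 + D) + (f 1 + D) / P n) := by
            refine mul_le_mul_of_nonneg_left ?_ hα.le
            linarith
        _ = α * (K + 1) * ((f 1 + D) / P n) := by field_simp
    have hP2 : P (n+2) = P n * (4:ℝ)^q := by
      have h24 : ((2:ℝ)^(n+2)) = (2:ℝ)^n * 4 := by ring
      rw [hPdef]; simp only
      rw [h24, Real.mul_rpow (by positivity) (by norm_num)]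
    have hvP : v ^ q ≤ P (n+2) := Real.rpow_le_rpow (by linarith) (le_of_lt hm2) hq0
    have hB : 1 + v ^ q ≤ 2 * (P n * (4:ℝ)^q) := by
      have h1 := hPone (n+2)
      rw [hP2] at hvP h1
      linarith
    have hApos : 0 ≤ α * (K + 1) * ((f 1 + D) / P n) :=
      mul_nonneg (mul_nonneg hα.le (by linarith)) (div_nonneg hfD hPn.le)
    calc f v * (1 + v ^ q) ≤ (α * (K + 1) * ((f 1 + D) / P n)) * (2 * (P n * (4:ℝ)^q)) :=
          mul_le_mul hA hB h1vq.le hApos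
      _ = C₂ * (f 1 + D) := by rw [hC₂]; field_simp
      _ ≤ (C₁ + C₂) * (f 1 + D) := by nlinarith [mul_nonneg hC₁pos.le hfD]
end

section
/- Let (M,Q,l) be subextremal Reissner–Nordström–AdS parameters with 0 < |Q| < M, let 0 < r_− < r_+ denote the two positive roots of Δ, and let α < 9/4. Then there exists ℓ₀ ∈ ℕ (depending on M, Q, l, α) such that for every integer ℓ ≥ ℓ₀ there is a point r_{ℓ,max} > r_+ which is a local maximum of the potential V_ℓ on (r_+, ∞) and which satisfies V_ℓ'(r) ≥ 0 for all r ∈ [r_+, r_{ℓ,max}]. Moreover, these points can be chosen so that r_{ℓ,max} → (3/2)M + √((9/4)M² − 2Q²) as ℓ → ∞. -/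
/-!
Write `V_ℓ = V₀ + ℓ(ℓ+1) W` with `W = h/r²`. Then `W' = (-2r² + 6Mr - 4Q²)/r⁵` is positive on
`[r₊, r_c)` and has a simple zero at the photon sphere `r_c = 3M/2 + √(9M²/4 - 2Q²)`, with
`W''(r_c) < 0`; that `r₊` lies below `r_c` comes from Vieta's relations between the two horizons.
For large `ℓ` the term `ℓ(ℓ+1) W` dominates on compact sets, so `V_ℓ' > 0` on `[r₊, r_c - δ]`, and
`V_ℓ'` is strictly decreasing on `[r_c - δ, r_c + δ]` and negative at `r_c + δ`. Its unique zero
there is the local maximum, and the same domination at `r_c ± ε` forces it to converge to `r_c`.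
-/

open Real Filter

/-- The metric coefficient `h(r) = Δ(r)/r² = 1 − 2M/r + Q²/r² + r²/l²`. -/
noncomputable def hRNAdS (M Q l : ℝ) : ℝ → ℝ :=
  fun r => 1 - 2 * M / r + Q ^ 2 / r ^ 2 + r ^ 2 / l ^ 2

/-- The potential `V_ℓ(r) = h(r)·( h'(r)/r + ℓ(ℓ+1)/r² − α/l² )` of the radial o.d.e. -/
noncomputable def VRNAdS (M Q l α : ℝ) (ℓ : ℕ) : ℝ → ℝ :=
  fun r => hRNAdS M Q l r *
    (deriv (hRNAdS M Q l) r / r + ((ℓ : ℝ) * ((ℓ : ℝ) + 1)) / r ^ 2 - α / l ^ 2)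

open Set Topology

section LargeCoupling

variable {f g : ℝ → ℝ} {K : Set ℝ}

lemma eventually_forall_add_mul_pos (hK : IsCompact K) (hf : ContinuousOn f K)
    (hg : ContinuousOn g K) (hpos : ∀ x ∈ K, 0 < g x) :
    ∀ᶠ c in atTop, ∀ x ∈ K, 0 < f x + c * g x := by
  rcases K.eq_empty_or_nonempty with rfl | hne
  · exact Eventually.of_forall fun _ _ h => h.elim
  obtain ⟨x₁, hx₁, hmin⟩ := hK.exists_isMinOn hne hg
  obtain ⟨C, hC⟩ := hK.exists_bound_of_continuousOn hf
  filter_upwards [eventually_gt_atTop (C / g x₁), eventually_ge_atTop 0] with c hcC hc0 x hx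
  have hCc : C < c * g x₁ := (div_lt_iff₀ (hpos x₁ hx₁)).1 hcC
  have hfx : -C ≤ f x := neg_le_of_abs_le (hC x hx)
  nlinarith [mul_le_mul_of_nonneg_left (hmin hx) hc0]

lemma eventually_forall_add_mul_neg (hK : IsCompact K) (hf : ContinuousOn f K)
    (hg : ContinuousOn g K) (hneg : ∀ x ∈ K, g x < 0) :
    ∀ᶠ c in atTop, ∀ x ∈ K, f x + c * g x < 0 := by
  filter_upwards [eventually_forall_add_mul_pos hK hf.neg hg.neg fun x hx => neg_pos.2 (hneg x hx)]
    with c hc x hx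
  have h := hc x hx
  rw [Pi.neg_apply, Pi.neg_apply] at h
  linarith

variable {F G : ℝ → ℝ} {U : Set ℝ}

lemma deriv_add_const_mul_eqOn (hU : IsOpen U) (hF : DifferentiableOn ℝ F U)
    (hG : DifferentiableOn ℝ G U) (c : ℝ) :
    EqOn (deriv fun x => F x + c * G x) (fun x => deriv F x + c * deriv G x) U := by
  intro x hx
  rw [deriv_fun_add (hF.differentiableAt (hU.mem_nhds hx))
    ((hG.differentiableAt (hU.mem_nhds hx)).const_mul c), deriv_const_mul_field]

lemma eventually_forall_deriv_add_mul_pos (hU : IsOpen U) (hF : ContDiffOn ℝ 1 F U)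
    (hG : ContDiffOn ℝ 1 G U) (hK : IsCompact K) (hKU : K ⊆ U) (hpos : ∀ x ∈ K, 0 < deriv G x) :
    ∀ᶠ c in atTop, ∀ x ∈ K, 0 < deriv (fun x => F x + c * G x) x := by
  filter_upwards [eventually_forall_add_mul_pos hK
    ((hF.continuousOn_deriv_of_isOpen hU le_rfl).mono hKU)
    ((hG.continuousOn_deriv_of_isOpen hU le_rfl).mono hKU) hpos] with c hc x hx
  rw [deriv_add_const_mul_eqOn hU (hF.differentiableOn one_ne_zero)
    (hG.differentiableOn one_ne_zero) c (hKU hx)]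
  exact hc x hx

lemma eventually_forall_deriv_add_mul_neg (hU : IsOpen U) (hF : ContDiffOn ℝ 1 F U)
    (hG : ContDiffOn ℝ 1 G U) (hK : IsCompact K) (hKU : K ⊆ U) (hneg : ∀ x ∈ K, deriv G x < 0) :
    ∀ᶠ c in atTop, ∀ x ∈ K, deriv (fun x => F x + c * G x) x < 0 := by
  filter_upwards [eventually_forall_add_mul_neg hK
    ((hF.continuousOn_deriv_of_isOpen hU le_rfl).mono hKU)
    ((hG.continuousOn_deriv_of_isOpen hU le_rfl).mono hKU) hneg] with c hc x hx
  rw [deriv_add_const_mul_eqOn hU (hF.differentiableOn one_ne_zero)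
    (hG.differentiableOn one_ne_zero) c (hKU hx)]
  exact hc x hx

lemma eventually_deriv_add_mul_pos (hU : IsOpen U) (hF : ContDiffOn ℝ 1 F U)
    (hG : ContDiffOn ℝ 1 G U) {x : ℝ} (hx : x ∈ U) (hpos : 0 < deriv G x) :
    ∀ᶠ c in atTop, 0 < deriv (fun x => F x + c * G x) x :=
  (eventually_forall_deriv_add_mul_pos hU hF hG isCompact_singleton (singleton_subset_iff.2 hx)
    fun _ hy => hy ▸ hpos).mono fun _ hc => hc x rfl

lemma eventually_deriv_add_mul_neg (hU : IsOpen U) (hF : ContDiffOn ℝ 1 F U)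
    (hG : ContDiffOn ℝ 1 G U) {x : ℝ} (hx : x ∈ U) (hneg : deriv G x < 0) :
    ∀ᶠ c in atTop, deriv (fun x => F x + c * G x) x < 0 :=
  (eventually_forall_deriv_add_mul_neg hU hF hG isCompact_singleton (singleton_subset_iff.2 hx)
    fun _ hy => hy ▸ hneg).mono fun _ hc => hc x rfl

lemma eventually_strictAntiOn_deriv_add_mul (hU : IsOpen U) (hF : ContDiffOn ℝ 2 F U)
    (hG : ContDiffOn ℝ 2 G U) {a b : ℝ} (habU : Icc a b ⊆ U)
    (hneg : ∀ x ∈ Icc a b, deriv (deriv G) x < 0) :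
    ∀ᶠ c in atTop, StrictAntiOn (deriv fun x => F x + c * G x) (Icc a b) := by
  have hD (c : ℝ) := deriv_add_const_mul_eqOn hU (hF.differentiableOn two_ne_zero)
    (hG.differentiableOn two_ne_zero) c
  filter_upwards [eventually_forall_deriv_add_mul_neg hU (hF.deriv_of_isOpen hU le_rfl)
    (hG.deriv_of_isOpen hU le_rfl) isCompact_Icc habU hneg] with c hc
  refine strictAntiOn_of_deriv_neg (convex_Icc a b) ?_ fun x hx => ?_
  · exact ((hF.add (contDiffOn_const.mul hG)).continuousOn_deriv_of_isOpen hU one_le_two).mono habU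
  · rw [(hD c).deriv hU (habU (interior_subset hx))]
    exact hc x (interior_subset hx)

end LargeCoupling

lemma exists_isLocalMax_of_strictAntiOn_deriv {Φ : ℝ → ℝ} {p a b : ℝ} (hpa : p ≤ a) (hab : a < b)
    (hΦ : ∀ x ∈ Icc p b, DifferentiableAt ℝ Φ x) (hpos : ∀ x ∈ Icc p a, 0 < deriv Φ x)
    (hneg : deriv Φ b < 0) (hanti : StrictAntiOn (deriv Φ) (Icc a b)) :
    ∃ x ∈ Ioo a b, deriv Φ x = 0 ∧ IsLocalMax Φ x ∧ ∀ y ∈ Icc p x, 0 ≤ deriv Φ y := by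
  have hΦab : ∀ x ∈ Icc a b, DifferentiableAt ℝ Φ x := fun x hx => hΦ x ⟨hpa.trans hx.1, hx.2⟩
  -- Darboux: no continuity of `deriv Φ` is needed to find its zero.
  obtain ⟨x, hx, hx0⟩ := exists_hasDerivWithinAt_eq_of_lt_of_gt hab.le
    (fun y hy => (hΦab y hy).hasDerivAt.hasDerivWithinAt) (hpos a ⟨hpa, le_rfl⟩) hneg
  have hxI : x ∈ Icc a b := Ioo_subset_Icc_self hx
  have hleft : ∀ y ∈ Icc a b, y < x → 0 < deriv Φ y := fun y hy hyx => hx0 ▸ hanti hy hxI hyx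
  have hright : ∀ y ∈ Icc a b, x < y → deriv Φ y < 0 := fun y hy hxy => hx0 ▸ hanti hxI hy hxy
  refine ⟨x, hx, hx0, ?_, fun y hy => ?_⟩
  · have hdiff : DifferentiableOn ℝ Φ (Ioo a b) := fun y hy =>
      (hΦab y (Ioo_subset_Icc_self hy)).differentiableWithinAt
    exact isLocalMax_of_deriv_Ioo hx.1 hx.2 (hΦab x hxI).continuousAt
      (hdiff.mono (Ioo_subset_Ioo_right hx.2.le)) (hdiff.mono (Ioo_subset_Ioo_left hx.1.le))
      (fun y hy => (hleft y ⟨hy.1.le, hy.2.le.trans hx.2.le⟩ hy.2).le)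
      (fun y hy => (hright y ⟨hx.1.le.trans hy.1.le, hy.2.le⟩ hy.1).le)
  · rcases le_or_gt y a with hya | hay
    · exact (hpos y ⟨hy.1, hya⟩).le
    rcases hy.2.eq_or_lt with rfl | hyx
    · exact hx0.ge
    · exact (hleft y ⟨hay.le, hyx.le.trans hx.2.le⟩ hyx).le

lemma tendsto_of_eventually_strictAntiOn_eq_zero {ι : Type*} {D : ι → ℝ → ℝ} {xc : ι → ℝ}
    {a b x₀ : ℝ} {L : Filter ι} (hx₀ : x₀ ∈ Ioo a b)
    (hzero : ∀ᶠ c in L, xc c ∈ Icc a b ∧ D c (xc c) = 0 ∧ StrictAntiOn (D c) (Icc a b))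
    (hleft : ∀ u ∈ Ico a x₀, ∀ᶠ c in L, 0 < D c u)
    (hright : ∀ v ∈ Ioc x₀ b, ∀ᶠ c in L, D c v < 0) :
    Tendsto xc L (𝓝 x₀) := by
  refine tendsto_order.2 ⟨fun a' ha' => ?_, fun b' hb' => ?_⟩
  · have hu : max a' a ∈ Ico a x₀ := ⟨le_max_right _ _, max_lt ha' hx₀.1⟩
    filter_upwards [hzero, hleft _ hu] with c ⟨hxc, hx0, hanti⟩ hpos
    exact (le_max_left _ _).trans_lt
      ((hanti.lt_iff_gt hxc ⟨hu.1, hu.2.le.trans hx₀.2.le⟩).1 (hx0 ▸ hpos))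
  · have hv : min b' b ∈ Ioc x₀ b := ⟨lt_min hb' hx₀.2, min_le_right _ _⟩
    filter_upwards [hzero, hright _ hv] with c ⟨hxc, hx0, hanti⟩ hneg
    exact ((hanti.lt_iff_gt ⟨hx₀.1.le.trans hv.1.le, hv.2⟩ hxc).1 (hx0 ▸ hneg)).trans_le
      (min_le_left _ _)

lemma exists_mem_Ioo_Icc_subset_of_mem_nhds {s : Set ℝ} {x : ℝ} (hs : s ∈ 𝓝 x) :
    ∃ a b, x ∈ Ioo a b ∧ Icc a b ⊆ s := by
  obtain ⟨a, b, -, hab, habs⟩ := exists_Icc_mem_subset_of_mem_nhds hs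
  exact ⟨a, b, interior_Icc (a := a) (b := b) ▸ mem_interior_iff_mem_nhds.2 hab, habs⟩

lemma eventually_exists_isLocalMax_add_mul {F G : ℝ → ℝ} {U : Set ℝ} {p a b : ℝ}
    (hU : IsOpen U) (hF : ContDiffOn ℝ 2 F U) (hG : ContDiffOn ℝ 2 G U) (hpa : p ≤ a)
    (hab : a < b) (hpbU : Icc p b ⊆ U) (hpos : ∀ x ∈ Icc p a, 0 < deriv G x)
    (hneg : deriv G b < 0) (hconc : ∀ x ∈ Icc a b, deriv (deriv G) x < 0) :
    ∀ᶠ c in atTop, ∃ x, x ∈ Ioo a b ∧ deriv (fun x => F x + c * G x) x = 0 ∧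
      IsLocalMax (fun x => F x + c * G x) x ∧
      ∀ y ∈ Icc p x, 0 ≤ deriv (fun x => F x + c * G x) y := by
  have hF₁ := hF.of_le one_le_two
  have hG₁ := hG.of_le one_le_two
  filter_upwards [eventually_forall_deriv_add_mul_pos hU hF₁ hG₁ isCompact_Icc
      ((Icc_subset_Icc_right hab.le).trans hpbU) hpos,
    eventually_deriv_add_mul_neg hU hF₁ hG₁ (hpbU ⟨hpa.trans hab.le, le_rfl⟩) hneg,
    eventually_strictAntiOn_deriv_add_mul hU hF hG ((Icc_subset_Icc_left hpa).trans hpbU) hconc]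
    with c hpos hb hanti
  obtain ⟨x, hx, h⟩ := exists_isLocalMax_of_strictAntiOn_deriv hpa hab
    (fun x hx => ((hF.add (contDiffOn_const.mul hG)).differentiableOn two_ne_zero).differentiableAt
      (hU.mem_nhds (hpbU hx))) hpos hb hanti
  exact ⟨x, hx, h⟩

theorem exists_tendsto_isLocalMax_add_mul {F G : ℝ → ℝ} {U : Set ℝ} {p x₀ : ℝ}
    (hU : IsOpen U) (hF : ContDiffOn ℝ 2 F U) (hG : ContDiffOn ℝ 2 G U)
    (hpx₀ : p < x₀) (hpU : Icc p x₀ ⊆ U)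
    (hG_pos : ∀ x ∈ Ico p x₀, 0 < deriv G x) (hG_zero : deriv G x₀ = 0)
    (hG_two : deriv (deriv G) x₀ < 0) :
    ∃ xc : ℝ → ℝ, (∀ᶠ c in atTop, p < xc c ∧ IsLocalMax (fun x => F x + c * G x) (xc c) ∧
        ∀ x ∈ Icc p (xc c), 0 ≤ deriv (fun x => F x + c * G x) x) ∧
      Tendsto xc atTop (𝓝 x₀) := by
  have hx₀U : x₀ ∈ U := hpU ⟨hpx₀.le, le_rfl⟩
  obtain ⟨a, b, hx₀ab, hab⟩ := exists_mem_Ioo_Icc_subset_of_mem_nhds <|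
    inter_mem (inter_mem (hU.mem_nhds hx₀U) (Ioi_mem_nhds hpx₀))
      (((hG.deriv_of_isOpen hU le_rfl).continuousOn_deriv_of_isOpen hU le_rfl).continuousAt
        (hU.mem_nhds hx₀U) |>.eventually_lt continuousAt_const hG_two)
  have hpa : p < a := (hab ⟨le_rfl, (hx₀ab.1.trans hx₀ab.2).le⟩).1.2
  have habU : Icc a b ⊆ U := fun x hx => (hab hx).1.1
  have hpbU : Icc p b ⊆ U := fun x hx => (le_total x x₀).elim (fun h => hpU ⟨hx.1, h⟩)
    fun h => habU ⟨hx₀ab.1.le.trans h, hx.2⟩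
  have hG_anti : StrictAntiOn (deriv G) (Icc a b) := strictAntiOn_of_deriv_neg (convex_Icc a b)
    ((hG.continuousOn_deriv_of_isOpen hU one_le_two).mono habU)
    fun x hx => (hab (interior_subset hx)).2
  have hG_left (u : ℝ) (hu : u ∈ Ico a x₀) : 0 < deriv G u :=
    hG_zero ▸ hG_anti ⟨hu.1, hu.2.le.trans hx₀ab.2.le⟩ (Ioo_subset_Icc_self hx₀ab) hu.2
  have hG_right (v : ℝ) (hv : v ∈ Ioc x₀ b) : deriv G v < 0 :=
    hG_zero ▸ hG_anti (Ioo_subset_Icc_self hx₀ab) ⟨hx₀ab.1.le.trans hv.1.le, hv.2⟩ hv.1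
  obtain ⟨xc, hxc⟩ := (eventually_exists_isLocalMax_add_mul (F := F) hU hF hG hpa.le
    (hx₀ab.1.trans hx₀ab.2) hpbU (fun x hx => hG_pos x ⟨hx.1, hx.2.trans_lt hx₀ab.1⟩)
    (hG_right b ⟨hx₀ab.2, le_rfl⟩) fun x hx => (hab hx).2).choice
  refine ⟨xc, hxc.mono fun c ⟨hx, _, hmax, hnonneg⟩ => ⟨hpa.trans hx.1, hmax, hnonneg⟩, ?_⟩
  have hF₁ := hF.of_le one_le_two
  have hG₁ := hG.of_le one_le_two
  refine tendsto_of_eventually_strictAntiOn_eq_zero hx₀ab ?_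
    (fun u hu => eventually_deriv_add_mul_pos hU hF₁ hG₁
      (habU ⟨hu.1, hu.2.le.trans hx₀ab.2.le⟩) (hG_left u hu))
    (fun v hv => eventually_deriv_add_mul_neg hU hF₁ hG₁
      (habU ⟨hx₀ab.1.le.trans hv.1.le, hv.2⟩) (hG_right v hv))
  filter_upwards [hxc, eventually_strictAntiOn_deriv_add_mul hU hF hG habU fun x hx => (hab hx).2]
    with c ⟨hx, h0, _⟩ hanti
  exact ⟨Ioo_subset_Icc_self hx, h0, hanti⟩

def photonPoly (M Q r : ℝ) : ℝ := -2 * r ^ 2 + 6 * M * r - 4 * Q ^ 2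

section RNAdS

variable (M Q l : ℝ)

noncomputable def WRNAdS : ℝ → ℝ := fun r => hRNAdS M Q l r / r ^ 2

lemma VRNAdS_eq_add (α : ℝ) (ℓ : ℕ) :
    VRNAdS M Q l α ℓ = fun r => VRNAdS M Q l α 0 r + (ℓ * (ℓ + 1) : ℝ) * WRNAdS M Q l r := by
  funext r
  simp only [VRNAdS, WRNAdS, Nat.cast_zero]
  ring

lemma contDiffOn_hRNAdS {n : WithTop ℕ∞} : ContDiffOn ℝ n (hRNAdS M Q l) (Ioi 0) := by
  unfold hRNAdS
  fun_prop (disch := exact fun x hx => by simp_all [ne_of_gt])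

lemma contDiffOn_WRNAdS {n : WithTop ℕ∞} : ContDiffOn ℝ n (WRNAdS M Q l) (Ioi 0) :=
  (contDiffOn_hRNAdS M Q l).div (contDiffOn_id.pow 2) fun _ hx => pow_ne_zero 2 (ne_of_gt hx)

lemma contDiffOn_VRNAdS (α : ℝ) (ℓ : ℕ) : ContDiffOn ℝ 2 (VRNAdS M Q l α ℓ) (Ioi 0) := by
  have hh : ContDiffOn ℝ 2 (hRNAdS M Q l) (Ioi 0) := contDiffOn_hRNAdS M Q l
  have hh' : ContDiffOn ℝ 2 (deriv (hRNAdS M Q l)) (Ioi 0) :=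
    (contDiffOn_hRNAdS M Q l (n := 3)).deriv_of_isOpen isOpen_Ioi (by norm_num)
  unfold VRNAdS
  fun_prop (disch := exact fun x hx => by simp_all [ne_of_gt])

lemma hasDerivAt_hRNAdS {r : ℝ} (hr : r ≠ 0) :
    HasDerivAt (hRNAdS M Q l) (2 * M / r ^ 2 - 2 * Q ^ 2 / r ^ 3 + 2 * r / l ^ 2) r :=
  ((((hasDerivAt_const r 1).sub ((hasDerivAt_const r (2 * M)).div (hasDerivAt_id' r) hr)).add
    ((hasDerivAt_const r (Q ^ 2)).div (hasDerivAt_pow 2 r) (pow_ne_zero 2 hr))).add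
    ((hasDerivAt_pow 2 r).div_const (l ^ 2))).congr_deriv (by field_simp; ring)

lemma hasDerivAt_WRNAdS {r : ℝ} (hr : r ≠ 0) :
    HasDerivAt (WRNAdS M Q l) (photonPoly M Q r / r ^ 5) r :=
  ((hasDerivAt_hRNAdS M Q l hr).div (hasDerivAt_pow 2 r) (pow_ne_zero 2 hr)).congr_deriv
    (by unfold hRNAdS photonPoly; field_simp; ring)

lemma deriv_deriv_WRNAdS {r : ℝ} (hr : 0 < r) :
    deriv (deriv (WRNAdS M Q l)) r = (6 * r ^ 2 - 24 * M * r + 20 * Q ^ 2) / r ^ 6 := by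
  have hW' : deriv (WRNAdS M Q l) =ᶠ[𝓝 r] fun r => photonPoly M Q r / r ^ 5 :=
    eventually_of_mem (Ioi_mem_nhds hr) fun x hx => (hasDerivAt_WRNAdS M Q l (ne_of_gt hx)).deriv
  rw [hW'.deriv_eq]
  refine (((((hasDerivAt_pow 2 r).const_mul (-2)).fun_add
    ((hasDerivAt_id' r).const_mul (6 * M))).sub_const (4 * Q ^ 2)).div
      (hasDerivAt_pow 5 r) (pow_ne_zero 5 hr.ne')).deriv.trans ?_
  field_simp
  ring

end RNAdS

noncomputable def photonSphereRadius (M Q : ℝ) : ℝ := 3 / 2 * M + √(9 / 4 * M ^ 2 - 2 * Q ^ 2)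

lemma photonSphereRadius_pos {M : ℝ} (hM : 0 < M) (Q : ℝ) : 0 < photonSphereRadius M Q := by
  unfold photonSphereRadius
  positivity

lemma sub_photonSphereRadius_le (M Q : ℝ) :
    3 * M - photonSphereRadius M Q ≤ photonSphereRadius M Q := by
  unfold photonSphereRadius
  linarith [Real.sqrt_nonneg (9 / 4 * M ^ 2 - 2 * Q ^ 2)]

section PhotonSphere

variable {M Q : ℝ}

lemma photonPoly_eq_mul (h : 2 * Q ^ 2 ≤ 9 / 4 * M ^ 2) (r : ℝ) :
    photonPoly M Q r =
      2 * (photonSphereRadius M Q - r) * (r - (3 * M - photonSphereRadius M Q)) := by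
  have hs := Real.sq_sqrt (sub_nonneg.2 h)
  unfold photonPoly photonSphereRadius
  linear_combination (-2) * hs

lemma photonPoly_photonSphereRadius (h : 2 * Q ^ 2 ≤ 9 / 4 * M ^ 2) :
    photonPoly M Q (photonSphereRadius M Q) = 0 := by
  rw [photonPoly_eq_mul h]
  ring

lemma lt_photonSphereRadius_of_photonPoly_pos (h : 2 * Q ^ 2 ≤ 9 / 4 * M ^ 2) {p : ℝ}
    (hp : 0 < photonPoly M Q p) : p < photonSphereRadius M Q := by
  have := sub_photonSphereRadius_le M Q
  rw [photonPoly_eq_mul h] at hp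
  by_contra! hle
  nlinarith

lemma photonPoly_pos_of_mem_Ico (h : 2 * Q ^ 2 ≤ 9 / 4 * M ^ 2) {p r : ℝ}
    (hp : 0 < photonPoly M Q p) (hr : r ∈ Ico p (photonSphereRadius M Q)) :
    0 < photonPoly M Q r := by
  have hprc := lt_photonSphereRadius_of_photonPoly_pos h hp
  rw [photonPoly_eq_mul h] at hp ⊢
  have hp₁ : 0 < p - (3 * M - photonSphereRadius M Q) := by nlinarith
  exact mul_pos (mul_pos two_pos (sub_pos.2 hr.2)) (by linarith [hr.1])

lemma deriv_deriv_WRNAdS_photonSphereRadius_neg (l : ℝ) (hM : 0 < M) (hQM : Q ^ 2 < M ^ 2) :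
    deriv (deriv (WRNAdS M Q l)) (photonSphereRadius M Q) < 0 := by
  rw [deriv_deriv_WRNAdS M Q l (photonSphereRadius_pos hM Q)]
  refine div_neg_of_neg_of_pos ?_ (pow_pos (photonSphereRadius_pos hM Q) 6)
  have hs := Real.sq_sqrt (by nlinarith : (0 : ℝ) ≤ 9 / 4 * M ^ 2 - 2 * Q ^ 2)
  have ht := Real.sqrt_nonneg (9 / 4 * M ^ 2 - 2 * Q ^ 2)
  unfold photonSphereRadius
  nlinarith [mul_nonneg hM.le ht]

lemma photonPoly_pos_of_horizons {l rm rp : ℝ} (hrm : 0 < rm) (hrmrp : rm < rp)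
    (hΔm : rm ^ 2 - 2 * M * rm + rm ^ 4 / l ^ 2 + Q ^ 2 = 0)
    (hΔp : rp ^ 2 - 2 * M * rp + rp ^ 4 / l ^ 2 + Q ^ 2 = 0) :
    0 < photonPoly M Q rp := by
  have hrp : 0 < rp := hrm.trans hrmrp
  have hM : (rm + rp) * (1 + (rm ^ 2 + rp ^ 2) / l ^ 2) - 2 * M = 0 := by
    have h : (rm - rp) * ((rm + rp) * (1 + (rm ^ 2 + rp ^ 2) / l ^ 2) - 2 * M) = 0 := by
      linear_combination hΔm - hΔp
    exact (mul_eq_zero.1 h).resolve_left (sub_ne_zero.2 hrmrp.ne)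
  have h : photonPoly M Q rp
      = rp * (rp - rm) + rp * (rp - rm) * (3 * rp ^ 2 + 2 * rp * rm + rm ^ 2) / l ^ 2 := by
    unfold photonPoly
    linear_combination (-4) * hΔp + rp * hM
  rw [h]
  have hd : 0 < rp - rm := sub_pos.2 hrmrp
  positivity

end PhotonSphere

theorem stmt3_general (M Q l α : ℝ) (hM : 0 < M) (hQM : |Q| < M)
    (rm rp : ℝ) (hrm : 0 < rm) (hrmrp : rm < rp)
    (hΔm : rm ^ 2 - 2 * M * rm + rm ^ 4 / l ^ 2 + Q ^ 2 = 0)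
    (hΔp : rp ^ 2 - 2 * M * rp + rp ^ 4 / l ^ 2 + Q ^ 2 = 0) :
    ∃ ℓ₀ : ℕ, ∃ rmax : ℕ → ℝ,
      (∀ ℓ : ℕ, ℓ₀ ≤ ℓ →
        rp < rmax ℓ ∧
        IsLocalMax (VRNAdS M Q l α ℓ) (rmax ℓ) ∧
        ∀ r ∈ Set.Icc rp (rmax ℓ), 0 ≤ deriv (VRNAdS M Q l α ℓ) r) ∧
      Tendsto rmax atTop
        (nhds ((3 / 2) * M + Real.sqrt ((9 / 4) * M ^ 2 - 2 * Q ^ 2))) := by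
  have hQ2 : Q ^ 2 < M ^ 2 := by nlinarith [sq_abs Q, abs_nonneg Q]
  have hdisc : 2 * Q ^ 2 ≤ 9 / 4 * M ^ 2 := by nlinarith
  have hrp : 0 < rp := hrm.trans hrmrp
  have hW'rp := photonPoly_pos_of_horizons hrm hrmrp hΔm hΔp
  obtain ⟨rmax, hev, hlim⟩ := exists_tendsto_isLocalMax_add_mul isOpen_Ioi
    (contDiffOn_VRNAdS M Q l α 0) (contDiffOn_WRNAdS M Q l)
    (lt_photonSphereRadius_of_photonPoly_pos hdisc hW'rp) (fun r hr => hrp.trans_le hr.1)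
    (fun r hr => by
      rw [(hasDerivAt_WRNAdS M Q l (hrp.trans_le hr.1).ne').deriv]
      exact div_pos (photonPoly_pos_of_mem_Ico hdisc hW'rp hr) (pow_pos (hrp.trans_le hr.1) 5))
    (by rw [(hasDerivAt_WRNAdS M Q l (photonSphereRadius_pos hM Q).ne').deriv,
      photonPoly_photonSphereRadius hdisc, zero_div])
    (deriv_deriv_WRNAdS_photonSphereRadius_neg l hM hQ2)
  have hc : Tendsto (fun ℓ : ℕ => (ℓ : ℝ) * (ℓ + 1)) atTop atTop :=
    tendsto_natCast_atTop_atTop.atTop_mul_atTop₀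
      (tendsto_atTop_add_const_right _ 1 tendsto_natCast_atTop_atTop)
  obtain ⟨ℓ₀, hℓ₀⟩ := eventually_atTop.1 (hc.eventually hev)
  refine ⟨ℓ₀, fun ℓ => rmax (ℓ * (ℓ + 1)), fun ℓ hℓ => ?_, hlim.comp hc⟩
  rw [VRNAdS_eq_add]
  exact hℓ₀ ℓ hℓ

/-- For all large angular momenta `ℓ`, the potential `V_ℓ` has a local maximum
`r_{ℓ,max} > r₊` with `V_ℓ' ≥ 0` on `[r₊, r_{ℓ,max}]`, and
`r_{ℓ,max} → (3/2)M + √((9/4)M² − 2Q²)` as `ℓ → ∞`. -/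
theorem stmt3 (M Q l α : ℝ) (hM : 0 < M) (hQ : 0 < |Q|) (hQM : |Q| < M)
    (hl : 0 < l) (hα : α < 9 / 4)
    (rm rp : ℝ) (hrm : 0 < rm) (hrmrp : rm < rp)
    (hΔm : rm ^ 2 - 2 * M * rm + rm ^ 4 / l ^ 2 + Q ^ 2 = 0)
    (hΔp : rp ^ 2 - 2 * M * rp + rp ^ 4 / l ^ 2 + Q ^ 2 = 0)
    (hroots : ∀ r : ℝ, 0 < r →
      r ^ 2 - 2 * M * r + r ^ 4 / l ^ 2 + Q ^ 2 = 0 → r = rm ∨ r = rp) :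
    ∃ ℓ₀ : ℕ, ∃ rmax : ℕ → ℝ,
      (∀ ℓ : ℕ, ℓ₀ ≤ ℓ →
        rp < rmax ℓ ∧
        IsLocalMax (VRNAdS M Q l α ℓ) (rmax ℓ) ∧
        ∀ r ∈ Set.Icc rp (rmax ℓ), 0 ≤ deriv (VRNAdS M Q l α ℓ) r) ∧
      Tendsto rmax atTop
        (nhds ((3 / 2) * M + Real.sqrt ((9 / 4) * M ^ 2 - 2 * Q ^ 2))) :=
  stmt3_general M Q l α hM hQM rm rp hrm hrmrp hΔm hΔp
end

section
/- Let ω₀ > 0 and let ω ∈ ℝ with |ω| ≥ ω₀. Let V : ℝ → ℝ be continuous with ∫_ℝ |V(y)| dy < ∞. Then there exists a unique bounded continuous function u : ℝ → ℂ satisfying the Volterra integral equation u(x) = e^{iωx} + ∫_{−∞}^{x} ( sin(ω(x − y)) / ω )·V(y)·u(y) dy for all x ∈ ℝ. Moreover, u is twice continuously differentiable, solves the o.d.e. u'' = (V − ω²)·u on ℝ, and satisfies u(x) − e^{iωx} → 0 as x → −∞. -/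
/-!
The Volterra operator `T u (x) = e^{iωx} + ∫_{-∞}^x sin(ω(x-y))/ω · V(y) u(y) dy` maps bounded
continuous functions to bounded continuous functions. With `ρ(x) = ∫_{-∞}^x |V|/|ω|`, the identity
`∫_{-∞}^x ρ' ρⁿ = ρ(x)ⁿ⁺¹/(n+1)` gives by induction `|Tⁿu - Tⁿv|(x) ≤ ρ(x)ⁿ/n! · ‖u - v‖`, so a
large iterate of `T` is a contraction and `T` has exactly one fixed point.

Expanding `sin(ω(x-y)) = sin(ωx) cos(ωy) - cos(ωx) sin(ωy)` writes the integral through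
primitives of integrable continuous functions, which can be differentiated twice; this gives
`u'' = (V - ω²) u`. Finally `|u(x) - e^{iωx}| ≤ ‖u‖ ρ(x) → 0` as `x → -∞`.
-/

open MeasureTheory Set Complex Filter Topology Function
open scoped BoundedContinuousFunction NNReal

section Primitive

variable {E : Type*} [NormedAddCommGroup E] [NormedSpace ℝ E] {f : ℝ → E}

theorem integral_Iic_eq_add_intervalIntegral (hf : Integrable f) (x : ℝ) :
    ∫ y in Iic x, f y = (∫ y in Iic 0, f y) + ∫ y in 0..x, f y := by
  rw [← intervalIntegral.integral_Iic_sub_Iic hf.integrableOn hf.integrableOn, add_sub_cancel]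

theorem hasDerivAt_integral_Iic [CompleteSpace E] (hf : Continuous f) (hfi : Integrable f) (x : ℝ) :
    HasDerivAt (fun x => ∫ y in Iic x, f y) (f x) x := by
  rw [show (fun x => ∫ y in Iic x, f y) = _ from funext (integral_Iic_eq_add_intervalIntegral hfi)]
  exact (intervalIntegral.integral_hasDerivAt_right hfi.intervalIntegrable
    (hf.stronglyMeasurableAtFilter _ _) hf.continuousAt).const_add _

theorem continuous_integral_Iic [CompleteSpace E] (hf : Continuous f) (hfi : Integrable f) :
    Continuous fun x => ∫ y in Iic x, f y :=
  continuous_iff_continuousAt.2 fun x => (hasDerivAt_integral_Iic hf hfi x).continuousAt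

theorem tendsto_integral_Iic_atBot (hf : Integrable f) :
    Tendsto (fun x => ∫ y in Iic x, f y) atBot (𝓝 0) := by
  have h := (intervalIntegral_tendsto_integral_Iic 0 hf.integrableOn tendsto_id).const_sub
    (∫ y in Iic 0, f y)
  rw [sub_self] at h
  refine h.congr fun x => ?_
  rw [← intervalIntegral.integral_Iic_sub_Iic hf.integrableOn hf.integrableOn, sub_sub_cancel, id]

end Primitive

section PowerOfPrimitive

variable {w : ℝ → ℝ}

theorem integrable_mul_pow_integral_Iic (hw : Continuous w) (hwi : Integrable w) (n : ℕ) :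
    Integrable fun y => w y * (∫ z in Iic y, w z) ^ n := by
  refine hwi.mul_bdd (c := (∫ z, ‖w z‖) ^ n)
    ((continuous_integral_Iic hw hwi).pow n).aestronglyMeasurable (.of_forall fun y => ?_)
  rw [norm_pow]
  gcongr
  exact (norm_integral_le_integral_norm _).trans
    (setIntegral_le_integral hwi.norm (.of_forall fun _ => norm_nonneg _))

theorem integral_Iic_mul_pow_integral_Iic (hw : Continuous w) (hwi : Integrable w) (n : ℕ)
    (x : ℝ) :
    ∫ y in Iic x, w y * (∫ z in Iic y, w z) ^ n = (∫ z in Iic x, w z) ^ (n + 1) / (n + 1) := by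
  have hF : ∀ y, HasDerivAt (fun a => (∫ z in Iic a, w z) ^ (n + 1) / (n + 1))
      (w y * (∫ z in Iic y, w z) ^ n) y := fun y =>
    (((hasDerivAt_integral_Iic hw hwi y).pow (n + 1)).div_const _).congr_deriv (by
      push_cast
      field_simp)
  have hlim := ((tendsto_integral_Iic_atBot hwi).pow (n + 1)).div_const ((n : ℝ) + 1)
  rw [zero_pow n.succ_ne_zero, zero_div] at hlim
  rw [integral_Iic_of_hasDerivAt_of_tendsto
    (((continuous_integral_Iic hw hwi).pow (n + 1)).div_const _).continuousWithinAt
    (fun y _ => hF y) (integrable_mul_pow_integral_Iic hw hwi n).integrableOn hlim, sub_zero,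
    Pi.pow_apply]

end PowerOfPrimitive

theorem exists_unique_isFixedPt_of_lipschitzWith_iterate {α : Type*} [MetricSpace α]
    [CompleteSpace α] [Nonempty α] {f : α → α} (K : ℝ≥0)
    (hf : ∀ n : ℕ, LipschitzWith (K ^ n / n.factorial) f^[n]) : ∃! x, IsFixedPt f x := by
  obtain ⟨n, hn⟩ := ((FloorSemiring.tendsto_pow_div_factorial_atTop (K : ℝ)).eventually
    (gt_mem_nhds one_pos)).exists
  have hC : ContractingWith (K ^ n / n.factorial) f^[n] := ⟨by exact_mod_cast hn, hf n⟩
  exact ⟨_, hC.isFixedPt_fixedPoint_iterate,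
    fun y hy => hC.fixedPoint_unique' (hy.iterate n) hC.fixedPoint_isFixedPt⟩

section Duhamel

variable {ω : ℝ} {g : ℝ → ℂ}

noncomputable def duhamel (ω : ℝ) (g : ℝ → ℂ) (x : ℝ) : ℂ :=
  ∫ y in Iic x, ((Real.sin (ω * (x - y)) / ω : ℝ) : ℂ) * g y

noncomputable def cosDuhamel (ω : ℝ) (g : ℝ → ℂ) (x : ℝ) : ℂ :=
  ∫ y in Iic x, (Real.cos (ω * (x - y)) : ℂ) * g y

theorem integral_Iic_mul_mul_eq_duhamel (ω : ℝ) (V : ℝ → ℝ) (u : ℝ → ℂ) (x : ℝ) :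
    ∫ y in Iic x, ((Real.sin (ω * (x - y)) / ω : ℝ) : ℂ) * V y * u y
      = duhamel ω (fun y => V y * u y) x := by
  simp only [duhamel, mul_assoc]

theorem integrable_ofReal_mul {c : ℝ → ℝ} {C : ℝ} (hc : Continuous c) (hcC : ∀ t, |c t| ≤ C)
    (hg : Integrable g) : Integrable fun y => (c y : ℂ) * g y :=
  hg.bdd_mul (continuous_ofReal.comp hc).aestronglyMeasurable
    (.of_forall fun t => by simpa using hcC t)

theorem integrable_cos_mul (ω : ℝ) (hg : Integrable g) :
    Integrable fun y => (Real.cos (ω * y) : ℂ) * g y :=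
  integrable_ofReal_mul (by fun_prop) (fun _ => Real.abs_cos_le_one _) hg

theorem integrable_sin_mul (ω : ℝ) (hg : Integrable g) :
    Integrable fun y => (Real.sin (ω * y) : ℂ) * g y :=
  integrable_ofReal_mul (by fun_prop) (fun _ => Real.abs_sin_le_one _) hg

theorem abs_sin_mul_div_le (ω t : ℝ) : |Real.sin (ω * t) / ω| ≤ |ω|⁻¹ := by
  rw [abs_div, div_eq_mul_inv]
  exact mul_le_of_le_one_left (inv_nonneg.2 (abs_nonneg ω)) (Real.abs_sin_le_one _)

theorem norm_duhamel_le (hg : Integrable g) (x : ℝ) :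
    ‖duhamel ω g x‖ ≤ ∫ y in Iic x, ‖g y‖ / |ω| := by
  refine norm_integral_le_of_norm_le (hg.norm.div_const _).integrableOn (.of_forall fun y => ?_)
  rw [norm_mul, norm_real, Real.norm_eq_abs, div_eq_inv_mul (‖g y‖)]
  exact mul_le_mul_of_nonneg_right (abs_sin_mul_div_le _ _) (norm_nonneg (g y))

theorem tendsto_duhamel_atBot (hg : Integrable g) : Tendsto (duhamel ω g) atBot (𝓝 0) :=
  squeeze_zero_norm (norm_duhamel_le hg)
    (tendsto_integral_Iic_atBot (hg.norm.div_const |ω|))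

theorem duhamel_sub {h : ℝ → ℂ} (hg : Integrable g) (hh : Integrable h) (x : ℝ) :
    duhamel ω g x - duhamel ω h x = duhamel ω (g - h) x := by
  have hK : Continuous fun y => Real.sin (ω * (x - y)) / ω := by fun_prop
  rw [duhamel, duhamel, duhamel, ← integral_sub
    (integrable_ofReal_mul hK (fun y => abs_sin_mul_div_le _ _) hg).integrableOn
    (integrable_ofReal_mul hK (fun y => abs_sin_mul_div_le _ _) hh).integrableOn]
  simp only [Pi.sub_apply, mul_sub]

theorem duhamel_eq_sin_mul_sub_cos_mul (hg : Integrable g) (x : ℝ) :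
    duhamel ω g x =
      ((Real.sin (ω * x) / ω : ℝ) : ℂ) * (∫ y in Iic x, (Real.cos (ω * y) : ℂ) * g y)
        - ((Real.cos (ω * x) / ω : ℝ) : ℂ) * ∫ y in Iic x, (Real.sin (ω * y) : ℂ) * g y := by
  rw [← integral_const_mul, ← integral_const_mul, ← integral_sub
    ((integrable_cos_mul ω hg).const_mul _).integrableOn
    ((integrable_sin_mul ω hg).const_mul _).integrableOn]
  refine setIntegral_congr_fun measurableSet_Iic fun y _ => ?_
  rw [mul_sub, Real.sin_sub]
  push_cast
  ring

theorem cosDuhamel_eq_cos_mul_add_sin_mul (hg : Integrable g) (x : ℝ) :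
    cosDuhamel ω g x =
      (Real.cos (ω * x) : ℂ) * (∫ y in Iic x, (Real.cos (ω * y) : ℂ) * g y)
        + (Real.sin (ω * x) : ℂ) * ∫ y in Iic x, (Real.sin (ω * y) : ℂ) * g y := by
  rw [← integral_const_mul, ← integral_const_mul, ← integral_add
    ((integrable_cos_mul ω hg).const_mul _).integrableOn
    ((integrable_sin_mul ω hg).const_mul _).integrableOn]
  refine setIntegral_congr_fun measurableSet_Iic fun y _ => ?_
  rw [mul_sub, Real.cos_sub]
  push_cast
  ring

theorem hasDerivAt_duhamel (hω : ω ≠ 0) (hg : Continuous g) (hgi : Integrable g) (x : ℝ) :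
    HasDerivAt (duhamel ω g) (cosDuhamel ω g x) x := by
  have hc := hasDerivAt_integral_Iic (by fun_prop) (integrable_cos_mul ω hgi) x
  have hs := hasDerivAt_integral_Iic (by fun_prop) (integrable_sin_mul ω hgi) x
  have hωx := (hasDerivAt_id' x).const_mul ω
  have hsin := (hωx.sin.div_const ω).ofReal_comp
  have hcos := (hωx.cos.div_const ω).ofReal_comp
  rw [show duhamel ω g = _ from funext (duhamel_eq_sin_mul_sub_cos_mul hgi),
    cosDuhamel_eq_cos_mul_add_sin_mul hgi]
  -- the two terms `sin(ωx) cos(ωx) g(x) / ω` coming from differentiating the primitives cancel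
  refine ((hsin.mul hc).sub (hcos.mul hs)).congr_deriv ?_
  have hωc : (ω : ℂ) ≠ 0 := ofReal_ne_zero.2 hω
  push_cast
  field_simp
  ring

theorem hasDerivAt_cosDuhamel (hg : Continuous g) (hgi : Integrable g) (x : ℝ) :
    HasDerivAt (cosDuhamel ω g) (g x - ω ^ 2 * duhamel ω g x) x := by
  have hc := hasDerivAt_integral_Iic (by fun_prop) (integrable_cos_mul ω hgi) x
  have hs := hasDerivAt_integral_Iic (by fun_prop) (integrable_sin_mul ω hgi) x
  have hωx := (hasDerivAt_id' x).const_mul ω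
  rw [show cosDuhamel ω g = _ from funext (cosDuhamel_eq_cos_mul_add_sin_mul hgi),
    duhamel_eq_sin_mul_sub_cos_mul hgi]
  refine ((hωx.cos.ofReal_comp.mul hc).add (hωx.sin.ofReal_comp.mul hs)).congr_deriv ?_
  push_cast
  field_simp
  linear_combination (g x) * Complex.cos_sq_add_sin_sq (ω * x : ℂ)

end Duhamel

theorem contDiff_two_of_hasDerivAt {E : Type*} [NormedAddCommGroup E] [NormedSpace ℝ E]
    {u u' u'' : ℝ → E} (hu : ∀ x, HasDerivAt u (u' x) x) (hu' : ∀ x, HasDerivAt u' (u'' x) x)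
    (hu'' : Continuous u'') : ContDiff ℝ 2 u := by
  have hderiv : deriv u = u' := funext fun x => (hu x).deriv
  have hderiv' : deriv u' = u'' := funext fun x => (hu' x).deriv
  refine contDiff_succ_iff_deriv (n := 1).2 ⟨fun x => (hu x).differentiableAt, by simp, ?_⟩
  rw [hderiv]
  exact contDiff_one_iff_deriv.2 ⟨fun x => (hu' x).differentiableAt, hderiv' ▸ hu''⟩

section Volterra

variable {ω : ℝ} {V : ℝ → ℝ}

theorem integrable_ofReal_mul_boundedContinuous (hVi : Integrable V) (u : ℝ →ᵇ ℂ) :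
    Integrable fun y => (V y : ℂ) * u y :=
  hVi.ofReal.mul_bdd u.continuous.aestronglyMeasurable (.of_forall u.norm_coe_le_norm)

theorem integral_Iic_abs_div_le (hVi : Integrable V) (x : ℝ) :
    ∫ y in Iic x, |V y| / |ω| ≤ ∫ y, |V y| / |ω| :=
  setIntegral_le_integral (hVi.abs.div_const _) (.of_forall fun _ => by positivity)

theorem norm_duhamel_ofReal_mul_le (hVc : Continuous V) (hVi : Integrable V) (h : ℝ →ᵇ ℂ)
    {C : ℝ} {n : ℕ} (hC : ∀ y, ‖h y‖ ≤ C * (∫ z in Iic y, |V z| / |ω|) ^ n / n.factorial)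
    (x : ℝ) :
    ‖duhamel ω (fun y => V y * h y) x‖
      ≤ C * (∫ z in Iic x, |V z| / |ω|) ^ (n + 1) / (n + 1).factorial := by
  have hw : Continuous fun y => |V y| / |ω| := by fun_prop
  have hwi : Integrable fun y => |V y| / |ω| := hVi.abs.div_const _
  calc ‖duhamel ω (fun y => V y * h y) x‖
      ≤ ∫ y in Iic x, ‖(V y : ℂ) * h y‖ / |ω| :=
        norm_duhamel_le (integrable_ofReal_mul_boundedContinuous hVi h) x
    _ ≤ ∫ y in Iic x, C / n.factorial *
          (|V y| / |ω| * (∫ z in Iic y, |V z| / |ω|) ^ n) := by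
        refine integral_mono
          ((integrable_ofReal_mul_boundedContinuous hVi h).norm.div_const _).integrableOn
          ((integrable_mul_pow_integral_Iic hw hwi n).const_mul _).integrableOn fun y => ?_
        rw [norm_mul, norm_real, Real.norm_eq_abs, mul_div_right_comm]
        calc |V y| / |ω| * ‖h y‖
            ≤ |V y| / |ω| * (C * (∫ z in Iic y, |V z| / |ω|) ^ n / n.factorial) := by
              gcongr
              exact hC y
          _ = _ := by ring
    _ = C * (∫ z in Iic x, |V z| / |ω|) ^ (n + 1) / (n + 1).factorial := by
        rw [integral_const_mul, integral_Iic_mul_pow_integral_Iic hw hwi, Nat.factorial_succ]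
        push_cast
        field_simp

theorem norm_duhamel_ofReal_mul_le_norm_mul (hVc : Continuous V) (hVi : Integrable V)
    (u : ℝ →ᵇ ℂ) (x : ℝ) :
    ‖duhamel ω (fun y => V y * u y) x‖ ≤ ‖u‖ * ∫ y, |V y| / |ω| :=
  calc ‖duhamel ω (fun y => V y * u y) x‖
      ≤ ‖u‖ * (∫ y in Iic x, |V y| / |ω|) ^ (0 + 1) / (0 + 1).factorial :=
        norm_duhamel_ofReal_mul_le hVc hVi u (fun y => by simpa using u.norm_coe_le_norm y) x
    _ ≤ ‖u‖ * ∫ y, |V y| / |ω| := by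
        simp only [zero_add, pow_one, Nat.factorial_one, Nat.cast_one, div_one]
        exact mul_le_mul_of_nonneg_left (integral_Iic_abs_div_le hVi x) (norm_nonneg u)

theorem hasDerivAt_duhamel_ofReal_mul (hω : ω ≠ 0) (hVc : Continuous V) (hVi : Integrable V)
    (u : ℝ →ᵇ ℂ) (x : ℝ) :
    HasDerivAt (duhamel ω fun y => V y * u y) (cosDuhamel ω (fun y => V y * u y) x) x :=
  hasDerivAt_duhamel hω ((continuous_ofReal.comp hVc).mul u.continuous)
    (integrable_ofReal_mul_boundedContinuous hVi u) x

theorem hasDerivAt_cosDuhamel_ofReal_mul (hVc : Continuous V) (hVi : Integrable V)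
    (u : ℝ →ᵇ ℂ) (x : ℝ) :
    HasDerivAt (cosDuhamel ω fun y => V y * u y)
      (V x * u x - ω ^ 2 * duhamel ω (fun y => V y * u y) x) x :=
  hasDerivAt_cosDuhamel ((continuous_ofReal.comp hVc).mul u.continuous)
    (integrable_ofReal_mul_boundedContinuous hVi u) x

noncomputable def volterraMap (hω : ω ≠ 0) (hVc : Continuous V) (hVi : Integrable V) (u : ℝ →ᵇ ℂ) :
    ℝ →ᵇ ℂ :=
  .ofNormedAddCommGroup (fun x => cexp (I * ω * x) + duhamel ω (fun y => V y * u y) x)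
    ((by fun_prop : Continuous fun x : ℝ => cexp (I * ω * x)).add <| continuous_iff_continuousAt.2
      fun x => (hasDerivAt_duhamel_ofReal_mul hω hVc hVi u x).continuousAt)
    (1 + ‖u‖ * ∫ y, |V y| / |ω|)
    fun x => (norm_add_le _ _).trans <| add_le_add
      (by rw [mul_assoc, ← ofReal_mul, mul_comm, norm_exp_ofReal_mul_I])
      (norm_duhamel_ofReal_mul_le_norm_mul hVc hVi u x)

theorem volterraMap_apply (hω : ω ≠ 0) (hVc : Continuous V) (hVi : Integrable V)
    (u : ℝ →ᵇ ℂ) (x : ℝ) :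
    volterraMap hω hVc hVi u x = cexp (I * ω * x) + duhamel ω (fun y => V y * u y) x :=
  rfl

theorem norm_volterraMap_iterate_sub_le (hω : ω ≠ 0) (hVc : Continuous V) (hVi : Integrable V)
    (u v : ℝ →ᵇ ℂ) (n : ℕ) (x : ℝ) :
    ‖(volterraMap hω hVc hVi)^[n] u x - (volterraMap hω hVc hVi)^[n] v x‖
      ≤ dist u v * (∫ y in Iic x, |V y| / |ω|) ^ n / n.factorial := by
  induction n generalizing x with
  | zero => simpa [dist_eq_norm] using u.dist_coe_le_dist (g := v) x
  | succ n ih =>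
    set a := (volterraMap hω hVc hVi)^[n] u
    set b := (volterraMap hω hVc hVi)^[n] v
    have hdiff : duhamel ω (fun y => V y * a y) x - duhamel ω (fun y => V y * b y) x
        = duhamel ω (fun y => V y * (a - b) y) x := by
      rw [duhamel_sub (integrable_ofReal_mul_boundedContinuous hVi a)
        (integrable_ofReal_mul_boundedContinuous hVi b)]
      simp only [Pi.sub_def, BoundedContinuousFunction.coe_sub, mul_sub]
    rw [iterate_succ_apply', iterate_succ_apply', volterraMap_apply, volterraMap_apply,
      add_sub_add_left_eq_sub, hdiff]
    exact norm_duhamel_ofReal_mul_le hVc hVi (a - b) ih x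

theorem lipschitzWith_volterraMap_iterate (hω : ω ≠ 0) (hVc : Continuous V)
    (hVi : Integrable V) (n : ℕ) :
    LipschitzWith ((∫ y, |V y| / |ω|).toNNReal ^ n / n.factorial)
      (volterraMap hω hVc hVi)^[n] := by
  refine LipschitzWith.of_dist_le_mul fun u v => ?_
  refine (BoundedContinuousFunction.dist_le (by positivity)).2 fun x => ?_
  rw [dist_eq_norm, NNReal.coe_div, NNReal.coe_pow, NNReal.coe_natCast,
    Real.coe_toNNReal _ (integral_nonneg fun _ => by positivity),
    div_mul_eq_mul_div, mul_comm _ (dist u v)]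
  refine (norm_volterraMap_iterate_sub_le hω hVc hVi u v n x).trans ?_
  gcongr dist u v * ?_ ^ n / _
  exact integral_Iic_abs_div_le hVi x

end Volterra

section ModeSolution

variable {ω : ℝ} {V : ℝ → ℝ}

theorem hasDerivAt_exp_I_mul (ω x : ℝ) :
    HasDerivAt (fun x : ℝ => cexp (I * ω * x)) (I * ω * cexp (I * ω * x)) x :=
  (((hasDerivAt_id' x).ofReal_comp.const_mul (I * ω)).cexp).congr_deriv (by simp [mul_comm])

theorem hasDerivAt_of_eq_exp_add_duhamel (hω : ω ≠ 0) (hVc : Continuous V) (hVi : Integrable V)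
    {u : ℝ →ᵇ ℂ} (hu : ∀ x, u x = cexp (I * ω * x) + duhamel ω (fun y => V y * u y) x)
    (x : ℝ) :
    HasDerivAt u (I * ω * cexp (I * ω * x) + cosDuhamel ω (fun y => V y * u y) x) x :=
  ((hasDerivAt_exp_I_mul ω x).add (hasDerivAt_duhamel_ofReal_mul hω hVc hVi u x))
    |>.congr_of_eventuallyEq (.of_forall hu)

theorem hasDerivAt_deriv_of_eq_exp_add_duhamel (hVc : Continuous V) (hVi : Integrable V)
    {u : ℝ →ᵇ ℂ} (hu : ∀ x, u x = cexp (I * ω * x) + duhamel ω (fun y => V y * u y) x)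
    (x : ℝ) :
    HasDerivAt (fun x : ℝ => I * ω * cexp (I * ω * x) + cosDuhamel ω (fun y => V y * u y) x)
      ((V x - ω ^ 2) * u x) x := by
  refine (((hasDerivAt_exp_I_mul ω x).const_mul (I * ω)).add
    (hasDerivAt_cosDuhamel_ofReal_mul hVc hVi u x)).congr_deriv ?_
  rw [hu x]
  linear_combination ((ω : ℂ) ^ 2 * cexp (I * ω * x)) * I_sq

end ModeSolution

/-- Existence and uniqueness of the mode solution `u₁`: there is a unique bounded
continuous solution of the Volterra equation; it is `C²`, solves
`u'' = (V − ω²)u`, and `u(x) − e^{iωx} → 0` as `x → −∞`. -/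
theorem stmt8 (ω₀ ω : ℝ) (hω₀ : 0 < ω₀) (hω : ω₀ ≤ |ω|)
    (V : ℝ → ℝ) (hVc : Continuous V) (hVi : Integrable V) :
    ∃ u : ℝ → ℂ,
      (Continuous u ∧ (∃ B : ℝ, ∀ x : ℝ, ‖u x‖ ≤ B) ∧
        ∀ x : ℝ, u x = Complex.exp (Complex.I * ω * x)
          + ∫ y in Iic x, ((Real.sin (ω * (x - y)) / ω : ℝ) : ℂ) * V y * u y) ∧
      (∀ v : ℝ → ℂ,
        (Continuous v ∧ (∃ B : ℝ, ∀ x : ℝ, ‖v x‖ ≤ B) ∧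
          ∀ x : ℝ, v x = Complex.exp (Complex.I * ω * x)
            + ∫ y in Iic x, ((Real.sin (ω * (x - y)) / ω : ℝ) : ℂ) * V y * v y) →
        v = u) ∧
      ContDiff ℝ 2 u ∧
      (∀ x : ℝ, deriv (deriv u) x = ((V x : ℂ) - (ω : ℂ) ^ 2) * u x) ∧
      Tendsto (fun x : ℝ => u x - Complex.exp (Complex.I * ω * x)) atBot (nhds 0) := by
  have hω0 : ω ≠ 0 := abs_pos.1 (hω₀.trans_le hω)
  obtain ⟨u, hfix, huniq⟩ := exists_unique_isFixedPt_of_lipschitzWith_iterate _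
    (lipschitzWith_volterraMap_iterate hω0 hVc hVi)
  have hu x : u x = cexp (I * ω * x) + duhamel ω (fun y => V y * u y) x :=
    (DFunLike.congr_fun hfix x).symm
  have hu' := hasDerivAt_of_eq_exp_add_duhamel hω0 hVc hVi hu
  have hu'' := hasDerivAt_deriv_of_eq_exp_add_duhamel hVc hVi hu
  simp only [integral_Iic_mul_mul_eq_duhamel]
  refine ⟨u, ⟨u.continuous, ⟨‖u‖, u.norm_coe_le_norm⟩, hu⟩, ?_,
    contDiff_two_of_hasDerivAt hu' hu''
      (((continuous_ofReal.comp hVc).sub continuous_const).mul u.continuous), fun x => ?_, ?_⟩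
  · rintro v ⟨hvc, ⟨B, hvB⟩, hv⟩
    exact congrArg DFunLike.coe <| huniq (.ofNormedAddCommGroup v hvc B hvB) <|
      BoundedContinuousFunction.ext fun x => (hv x).symm
  · rw [show deriv u = _ from funext fun x => (hu' x).deriv]
    exact (hu'' x).deriv
  · refine (tendsto_duhamel_atBot (ω := ω) (integrable_ofReal_mul_boundedContinuous hVi u)).congr
      fun x => ?_
    rw [hu x, add_sub_cancel_left]
end

section
/- Let (M,Q,l) be subextremal Reissner–Nordström–AdS parameters with two positive roots 0 < r_− < r_+ of Δ, and let α ∈ ℝ. Then there exist r_red ∈ (r_−, r_+) and β > 0 (depending only on M, Q, l, α) such that for all r ∈ [r_red, r_+]: β²·Ω²(r) − β·(Ω²)'(r) − (2β/r)·Ω²(r) − α/l² ≥ 1. (This is the positivity of the twisted potential 𝒱 = −(□f)/f − α/l² for the red-shift twisting function f(r) = e^{−βr}.) -/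
/-!
The argument rests on two facts at `r₊`: `Ω²(r₊) = 0` and `(Ω²)'(r₊) = -Δ'(r₊)/r₊² < 0`.
The second holds because `Δ` is strictly convex, so its slope at the larger of two roots is
positive. Near a zero `p` of a `C¹` function `F` with `F'(p) = -c < 0`, on some `[q, p]` the
function `F` is antitone, hence nonnegative, while `-F' ≥ c/2` and `2F/r ≤ c/4`; therefore
`β²F - βF' - (2β/r)F - a ≥ βc/4 - a`, which is at least `1` for `β = 4(1 + |a|)/c`.
-/

open Set Topology

noncomputable def redShiftPotential (F : ℝ → ℝ) (β a r : ℝ) : ℝ :=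
  β ^ 2 * F r - β * deriv F r - 2 * β / r * F r - a

theorem exists_Icc_one_le_redShiftPotential {F : ℝ → ℝ} {p L : ℝ} (a : ℝ) (hp : p ≠ 0)
    (hLp : L < p) (hF : ContDiffAt ℝ 1 F p) (hFp : F p = 0) (hF'p : deriv F p < 0) :
    ∃ q, L < q ∧ q < p ∧ ∃ β, 0 < β ∧ ∀ r ∈ Icc q p, 1 ≤ redShiftPotential F β a r := by
  set c := -deriv F p
  have hc : 0 < c := neg_pos.mpr hF'p
  have hdiff : ∀ᶠ x in 𝓝 p, DifferentiableAt ℝ F x :=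
    (hF.eventually (by simp)).mono fun x hx => hx.differentiableAt one_ne_zero
  have hderiv : ∀ᶠ x in 𝓝 p, deriv F x < -c / 2 :=
    (hF.derivWithin (m := 0) le_rfl).continuousAt.eventually_lt continuousAt_const
      (by linarith)
  have hsmall : ∀ᶠ x in 𝓝 p, 2 * F x / x < c / 4 :=
    ((continuousAt_const.mul hF.continuousAt).div continuousAt_id hp).eventually_lt
      continuousAt_const (by simpa [hFp] using hc)
  have hnear := (lt_mem_nhds hLp).and (hdiff.and (hderiv.and hsmall))
  obtain ⟨q, hqp, hq⟩ := mem_nhdsLE_iff_exists_Icc_subset.mp (nhdsWithin_le_nhds hnear)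
  have hanti : AntitoneOn F (Icc q p) :=
    antitoneOn_of_deriv_nonpos (convex_Icc q p)
      (fun x hx => (hq hx).2.1.continuousAt.continuousWithinAt)
      (fun x hx => (hq (interior_subset hx)).2.1.differentiableWithinAt)
      (fun x hx => by linarith [(hq (interior_subset hx)).2.2.1])
  refine ⟨q, (hq ⟨le_rfl, hqp.le⟩).1, hqp, 4 * (1 + |a|) / c, by positivity, fun r hr => ?_⟩
  obtain ⟨-, -, hF'r, hFr⟩ := hq hr
  have hF_nonneg : 0 ≤ F r := hFp ▸ hanti hr ⟨hqp.le, le_rfl⟩ hr.2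
  set β := 4 * (1 + |a|) / c
  have hβ : 0 < β := by positivity
  have hβc : β * c = 4 * (1 + |a|) := div_mul_cancel₀ _ hc.ne'
  calc 1 ≤ 0 + β * (c / 2) - β * (c / 4) - a := by linarith [le_abs_self a]
    _ ≤ β ^ 2 * F r - β * deriv F r - β * (2 * F r / r) - a := by
      have := mul_lt_mul_of_pos_left hF'r hβ
      have := mul_lt_mul_of_pos_left hFr hβ
      have : 0 ≤ β ^ 2 * F r := by positivity
      linarith
    _ = redShiftPotential F β a r := by unfold redShiftPotential; ring

namespace RNAdS

noncomputable def delta (M Q l r : ℝ) : ℝ := r ^ 2 - 2 * M * r + r ^ 4 / l ^ 2 + Q ^ 2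

noncomputable def deltaDeriv (M l r : ℝ) : ℝ := 2 * r - 2 * M + 4 * r ^ 3 / l ^ 2

noncomputable def omegaSq (M Q l r : ℝ) : ℝ := -(1 - 2 * M / r + Q ^ 2 / r ^ 2 + r ^ 2 / l ^ 2)

variable {M Q l : ℝ}

theorem delta_eq_taylor (a b : ℝ) :
    delta M Q l a = delta M Q l b + deltaDeriv M l b * (a - b)
      + (a - b) ^ 2 * (1 + (a ^ 2 + 2 * a * b + 3 * b ^ 2) / l ^ 2) := by
  unfold delta deltaDeriv; ring

theorem deltaDeriv_pos_of_lt {a b : ℝ} (hab : a < b) (ha : delta M Q l a = 0)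
    (hb : delta M Q l b = 0) : 0 < deltaDeriv M l b := by
  have hrem : 0 < (a - b) ^ 2 * (1 + (a ^ 2 + 2 * a * b + 3 * b ^ 2) / l ^ 2) := by
    have : 0 ≤ a ^ 2 + 2 * a * b + 3 * b ^ 2 := by nlinarith [sq_nonneg (a + b), sq_nonneg b]
    have := sub_ne_zero.mpr hab.ne
    positivity
  have := delta_eq_taylor (M := M) (Q := Q) (l := l) a b
  nlinarith

theorem omegaSq_eq {r : ℝ} (hr : r ≠ 0) : omegaSq M Q l r = -delta M Q l r / r ^ 2 := by
  unfold omegaSq delta; field_simp; ring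

theorem hasDerivAt_omegaSq {r : ℝ} (hr : r ≠ 0) :
    HasDerivAt (omegaSq M Q l) (-deltaDeriv M l r / r ^ 2 + 2 * delta M Q l r / r ^ 3) r := by
  have h := (((((hasDerivAt_inv hr).const_mul (2 * M)).const_sub 1).add
    (((hasDerivAt_pow 2 r).inv (pow_ne_zero 2 hr)).const_mul (Q ^ 2))).add
      ((hasDerivAt_pow 2 r).div_const (l ^ 2))).neg
  refine (h.congr_of_eventuallyEq (.of_forall fun s => ?_)).congr_deriv ?_
  · simp only [omegaSq, Pi.add_apply, Pi.neg_apply, Pi.inv_apply]; ring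
  · simp only [delta, deltaDeriv]; field_simp; ring

theorem omegaSq_eq_zero_of_delta_eq_zero {r : ℝ} (hr : r ≠ 0) (h : delta M Q l r = 0) :
    omegaSq M Q l r = 0 := by
  rw [omegaSq_eq hr, h, neg_zero, zero_div]

theorem deriv_omegaSq_neg_of_lt {a b : ℝ} (hb : b ≠ 0) (hab : a < b) (ha : delta M Q l a = 0)
    (hb0 : delta M Q l b = 0) : deriv (omegaSq M Q l) b < 0 := by
  rw [(hasDerivAt_omegaSq hb).deriv, hb0, mul_zero, zero_div, add_zero, neg_div, neg_lt_zero]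
  exact div_pos (deltaDeriv_pos_of_lt hab ha hb0) (by positivity)

theorem contDiffAt_omegaSq {r : ℝ} (hr : r ≠ 0) : ContDiffAt ℝ 1 (omegaSq M Q l) r := by
  unfold omegaSq; fun_prop (disch := simp [hr])

end RNAdS

theorem stmt9_general (M Q l α : ℝ)
    (rm rp : ℝ) (hrm : 0 < rm) (hrmrp : rm < rp)
    (hΔm : rm ^ 2 - 2 * M * rm + rm ^ 4 / l ^ 2 + Q ^ 2 = 0)
    (hΔp : rp ^ 2 - 2 * M * rp + rp ^ 4 / l ^ 2 + Q ^ 2 = 0) :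
    ∃ rred : ℝ, rm < rred ∧ rred < rp ∧
      ∃ β : ℝ, 0 < β ∧
        ∀ r ∈ Set.Icc rred rp,
          1 ≤ β ^ 2 * (-(1 - 2 * M / r + Q ^ 2 / r ^ 2 + r ^ 2 / l ^ 2))
              - β * deriv (fun s : ℝ =>
                  -(1 - 2 * M / s + Q ^ 2 / s ^ 2 + s ^ 2 / l ^ 2)) r
              - (2 * β / r) * (-(1 - 2 * M / r + Q ^ 2 / r ^ 2 + r ^ 2 / l ^ 2))
              - α / l ^ 2 := by
  have hrp : rp ≠ 0 := (hrm.trans hrmrp).ne'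
  exact exists_Icc_one_le_redShiftPotential (α / l ^ 2) hrp hrmrp
    (RNAdS.contDiffAt_omegaSq hrp) (RNAdS.omegaSq_eq_zero_of_delta_eq_zero hrp hΔp)
    (RNAdS.deriv_omegaSq_neg_of_lt hrp hrmrp hΔm hΔp)

/-- Positivity of the twisted potential for the red-shift twisting function
`f(r) = e^{−βr}` near the event horizon `r₊`: there are `r_red ∈ (r₋, r₊)` and
`β > 0` with `β²Ω² − β(Ω²)' − (2β/r)Ω² − α/l² ≥ 1` on `[r_red, r₊]`. -/
theorem stmt9 (M Q l α : ℝ) (hM : 0 < M) (hl : 0 < l)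
    (rm rp : ℝ) (hrm : 0 < rm) (hrmrp : rm < rp)
    (hΔm : rm ^ 2 - 2 * M * rm + rm ^ 4 / l ^ 2 + Q ^ 2 = 0)
    (hΔp : rp ^ 2 - 2 * M * rp + rp ^ 4 / l ^ 2 + Q ^ 2 = 0)
    (hroots : ∀ r : ℝ, 0 < r →
      r ^ 2 - 2 * M * r + r ^ 4 / l ^ 2 + Q ^ 2 = 0 → r = rm ∨ r = rp) :
    ∃ rred : ℝ, rm < rred ∧ rred < rp ∧
      ∃ β : ℝ, 0 < β ∧
        ∀ r ∈ Set.Icc rred rp,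
          1 ≤ β ^ 2 * (-(1 - 2 * M / r + Q ^ 2 / r ^ 2 + r ^ 2 / l ^ 2))
              - β * deriv (fun s : ℝ =>
                  -(1 - 2 * M / s + Q ^ 2 / s ^ 2 + s ^ 2 / l ^ 2)) r
              - (2 * β / r) * (-(1 - 2 * M / r + Q ^ 2 / r ^ 2 + r ^ 2 / l ^ 2))
              - α / l ^ 2 :=
  stmt9_general M Q l α rm rp hrm hrmrp hΔm hΔp
end

section
/- Let (M,Q,l) be subextremal Reissner–Nordström–AdS parameters with two positive roots 0 < r_− < r_+ of Δ, and let α ∈ ℝ. Then: (i) there exist r_blue ∈ (r_−, r_+) and c > 0 such that (Ω²)'(r) ≥ c for all r ∈ [r_−, r_blue]; and (ii) there exist r_blue ∈ (r_−, r_+) and β > 0 (depending only on M, Q, l, α) such that for all r ∈ [r_−, r_blue]: β²·Ω²(r) + β·(Ω²)'(r) + (2β/r)·Ω²(r) − α/l² ≥ 1. (This is the positivity of the twisted potential 𝒱 = −(□f)/f − α/l² for the blue-shift twisting function f(r) = e^{βr}.) -/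
/-!
`Δ(r) = r² + r⁴/l² − 2Mr + Q²` is strictly convex, so it is nonpositive between its roots
`r₋ < r₊` and `Δ'(r₋) < 0`. Since `Ω² = −Δ/r²`, at the root `r₋` we get
`(Ω²)'(r₋) = −Δ'(r₋)/r₋² > 0`, and continuity of `(Ω²)'` gives a uniform bound `c > 0` on some
`[r₋, r_blue]`. On that interval `Ω² ≥ 0`, so in the twisted potential the terms `β²Ω²` and
`(2β/r)Ω²` are nonnegative and `β(Ω²)' ≥ βc` beats `1 + α/l²` once `β` is large.
-/

open Set Topology

theorem ContinuousAt.exists_Icc_forall_pos_le {g : ℝ → ℝ} {a b : ℝ} (hg : ContinuousAt g a)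
    (hga : 0 < g a) (hab : a < b) :
    ∃ t, a < t ∧ t < b ∧ ∃ c, 0 < c ∧ ∀ r ∈ Icc a t, c ≤ g r := by
  have hev : ∀ᶠ r in 𝓝[≥] a, g a / 2 ≤ g r :=
    nhdsWithin_le_nhds (hg.eventually (eventually_ge_nhds (half_lt_self hga)))
  obtain ⟨u, hau, hu⟩ := mem_nhdsGE_iff_exists_Icc_subset.mp hev
  refine ⟨min u ((a + b) / 2), lt_min hau (by linarith), (min_le_right _ _).trans_lt (by linarith),
    g a / 2, half_pos hga, fun r hr => hu ⟨hr.1, hr.2.trans (min_le_left _ _)⟩⟩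

namespace ReissnerNordstromAdS

noncomputable section

variable {M Q l : ℝ}

def delta (M Q l r : ℝ) : ℝ := r ^ 2 - 2 * M * r + r ^ 4 / l ^ 2 + Q ^ 2

def omegaSq (M Q l r : ℝ) : ℝ := -(1 - 2 * M / r + Q ^ 2 / r ^ 2 + r ^ 2 / l ^ 2)

def omegaSqDeriv (M Q l r : ℝ) : ℝ := 2 * Q ^ 2 / r ^ 3 - 2 * M / r ^ 2 - 2 * r / l ^ 2

theorem hasDerivAt_delta (r : ℝ) :
    HasDerivAt (delta M Q l) (2 * r - 2 * M + 4 * r ^ 3 / l ^ 2) r := by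
  have := ((((hasDerivAt_pow 2 r).sub ((hasDerivAt_id r).const_mul (2 * M))).add
    ((hasDerivAt_pow 4 r).div_const (l ^ 2))).add_const (Q ^ 2))
  exact this.congr_deriv (by norm_num)

theorem strictConvexOn_delta (M Q l : ℝ) : StrictConvexOn ℝ univ (delta M Q l) := by
  have hsq : StrictConvexOn ℝ univ fun r : ℝ => r ^ 2 :=
    Even.strictConvexOn_pow even_two two_ne_zero
  have hquart : ConvexOn ℝ univ fun r : ℝ => (l ^ 2)⁻¹ • r ^ 4 :=
    (Even.convexOn_pow ⟨2, rfl⟩).smul (by positivity)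
  have hlin : ConcaveOn ℝ univ fun r : ℝ => (2 * M) • r :=
    ((2 * M) • LinearMap.id : ℝ →ₗ[ℝ] ℝ).concaveOn convex_univ
  have hdelta : delta M Q l = fun r => r ^ 2 + (l ^ 2)⁻¹ • r ^ 4 - (2 * M) • r + Q ^ 2 := by
    ext r
    simp only [delta, smul_eq_mul]
    ring
  rw [hdelta]
  exact ((hsq.add_convexOn hquart).sub_concaveOn hlin).add_const (Q ^ 2)

theorem delta_nonpos_of_mem_Icc {rm rp r : ℝ} (hΔm : delta M Q l rm = 0) (hΔp : delta M Q l rp = 0)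
    (hr : r ∈ Icc rm rp) : delta M Q l r ≤ 0 := by
  have := (strictConvexOn_delta M Q l).convexOn.le_on_segment (mem_univ rm) (mem_univ rp)
    (segment_eq_Icc (hr.1.trans hr.2) ▸ hr)
  rwa [hΔm, hΔp, max_self] at this

theorem deriv_delta_neg {rm rp : ℝ} (hrmrp : rm < rp) (hΔm : delta M Q l rm = 0)
    (hΔp : delta M Q l rp = 0) : deriv (delta M Q l) rm < 0 := by
  have := (strictConvexOn_delta M Q l).deriv_lt_slope (mem_univ rm) (mem_univ rp) hrmrp
    (hasDerivAt_delta rm).differentiableAt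
  rwa [slope_def_field, hΔm, hΔp, sub_zero, zero_div] at this

theorem omegaSq_eq {r : ℝ} (hr : r ≠ 0) : omegaSq M Q l r = -delta M Q l r / r ^ 2 := by
  unfold omegaSq delta
  field_simp
  ring

theorem hasDerivAt_omegaSq {r : ℝ} (hr : r ≠ 0) :
    HasDerivAt (omegaSq M Q l) (omegaSqDeriv M Q l r) r := by
  have h1 := (hasDerivAt_const r (2 * M)).div (hasDerivAt_id r) hr
  have h2 := (hasDerivAt_const r (Q ^ 2)).div (hasDerivAt_pow 2 r) (pow_ne_zero 2 hr)
  have h3 := (hasDerivAt_pow 2 r).div_const (l ^ 2)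
  refine ((((hasDerivAt_const r (1 : ℝ)).sub h1).add h2).add h3).neg.congr_deriv ?_
  simp only [omegaSqDeriv, id]
  field_simp
  ring

theorem omegaSq_nonneg_of_mem_Icc {rm rp r : ℝ} (hrm : 0 < rm) (hΔm : delta M Q l rm = 0)
    (hΔp : delta M Q l rp = 0) (hr : r ∈ Icc rm rp) : 0 ≤ omegaSq M Q l r := by
  rw [omegaSq_eq (hrm.trans_le hr.1).ne']
  exact div_nonneg (neg_nonneg.mpr (delta_nonpos_of_mem_Icc hΔm hΔp hr)) (sq_nonneg r)

theorem omegaSqDeriv_eq_of_delta_eq_zero {r : ℝ} (hr : r ≠ 0) (hΔ : delta M Q l r = 0) :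
    omegaSqDeriv M Q l r = -deriv (delta M Q l) r / r ^ 2 := by
  rw [(hasDerivAt_delta r).deriv]
  unfold delta at hΔ
  unfold omegaSqDeriv
  field_simp
  linear_combination 2 * hΔ

theorem continuousAt_omegaSqDeriv {r : ℝ} (hr : r ≠ 0) : ContinuousAt (omegaSqDeriv M Q l) r := by
  unfold omegaSqDeriv
  fun_prop (disch := positivity)

theorem exists_Icc_forall_le_deriv_omegaSq {rm rp : ℝ} (hrm : 0 < rm) (hrmrp : rm < rp)
    (hΔm : delta M Q l rm = 0) (hΔp : delta M Q l rp = 0) :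
    ∃ t, rm < t ∧ t < rp ∧ ∃ c, 0 < c ∧ ∀ r ∈ Icc rm t, c ≤ deriv (omegaSq M Q l) r := by
  have hpos : 0 < omegaSqDeriv M Q l rm := by
    rw [omegaSqDeriv_eq_of_delta_eq_zero hrm.ne' hΔm]
    exact div_pos (neg_pos.mpr (deriv_delta_neg hrmrp hΔm hΔp)) (by positivity)
  obtain ⟨t, hrmt, htrp, c, hc, hle⟩ :=
    (continuousAt_omegaSqDeriv hrm.ne').exists_Icc_forall_pos_le hpos hrmrp
  refine ⟨t, hrmt, htrp, c, hc, fun r hr => ?_⟩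
  rw [(hasDerivAt_omegaSq (hrm.trans_le hr.1).ne').deriv]
  exact hle r hr

end

end ReissnerNordstromAdS

open ReissnerNordstromAdS

theorem stmt10_general (M Q l α : ℝ)
    (rm rp : ℝ) (hrm : 0 < rm) (hrmrp : rm < rp)
    (hΔm : rm ^ 2 - 2 * M * rm + rm ^ 4 / l ^ 2 + Q ^ 2 = 0)
    (hΔp : rp ^ 2 - 2 * M * rp + rp ^ 4 / l ^ 2 + Q ^ 2 = 0) :
    (∃ rblue : ℝ, rm < rblue ∧ rblue < rp ∧ ∃ c : ℝ, 0 < c ∧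
      ∀ r ∈ Set.Icc rm rblue,
        c ≤ deriv (fun s : ℝ =>
              -(1 - 2 * M / s + Q ^ 2 / s ^ 2 + s ^ 2 / l ^ 2)) r) ∧
    (∃ rblue : ℝ, rm < rblue ∧ rblue < rp ∧ ∃ β : ℝ, 0 < β ∧
      ∀ r ∈ Set.Icc rm rblue,
        1 ≤ β ^ 2 * (-(1 - 2 * M / r + Q ^ 2 / r ^ 2 + r ^ 2 / l ^ 2))
            + β * deriv (fun s : ℝ =>
                -(1 - 2 * M / s + Q ^ 2 / s ^ 2 + s ^ 2 / l ^ 2)) r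
            + (2 * β / r) * (-(1 - 2 * M / r + Q ^ 2 / r ^ 2 + r ^ 2 / l ^ 2))
            - α / l ^ 2) := by
  obtain ⟨t, hrmt, htrp, c, hc, hderiv⟩ := exists_Icc_forall_le_deriv_omegaSq hrm hrmrp hΔm hΔp
  refine ⟨⟨t, hrmt, htrp, c, hc, hderiv⟩, t, hrmt, htrp, (1 + |α| / l ^ 2) / c, by positivity,
    fun r hr => ?_⟩
  set β := (1 + |α| / l ^ 2) / c
  have hβc : β * c = 1 + |α| / l ^ 2 := div_mul_cancel₀ _ hc.ne'
  have hΩ : 0 ≤ omegaSq M Q l r := omegaSq_nonneg_of_mem_Icc hrm hΔm hΔp ⟨hr.1, hr.2.trans htrp.le⟩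
  have hα : α / l ^ 2 ≤ |α| / l ^ 2 := div_le_div_of_nonneg_right (le_abs_self α) (sq_nonneg l)
  have hsq_term : 0 ≤ β ^ 2 * omegaSq M Q l r := by positivity
  have hlin_term : 0 ≤ 2 * β / r * omegaSq M Q l r :=
    mul_nonneg (div_nonneg (by positivity) (hrm.le.trans hr.1)) hΩ
  have hderiv_term : β * c ≤ β * deriv (omegaSq M Q l) r := by gcongr; exact hderiv r hr
  change 1 ≤ β ^ 2 * omegaSq M Q l r + β * deriv (omegaSq M Q l) r + 2 * β / r * omegaSq M Q l r
    - α / l ^ 2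
  linarith

/-- Near the Cauchy horizon `r₋`: (i) `(Ω²)' ≥ c > 0` on `[r₋, r_blue]` for some
`r_blue ∈ (r₋, r₊)`; (ii) positivity of the twisted potential for the blue-shift
twisting function `f(r) = e^{βr}`: `β²Ω² + β(Ω²)' + (2β/r)Ω² − α/l² ≥ 1` on
`[r₋, r_blue]` for suitable `r_blue ∈ (r₋, r₊)` and `β > 0`. -/
theorem stmt10 (M Q l α : ℝ) (hM : 0 < M) (hl : 0 < l)
    (rm rp : ℝ) (hrm : 0 < rm) (hrmrp : rm < rp)
    (hΔm : rm ^ 2 - 2 * M * rm + rm ^ 4 / l ^ 2 + Q ^ 2 = 0)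
    (hΔp : rp ^ 2 - 2 * M * rp + rp ^ 4 / l ^ 2 + Q ^ 2 = 0)
    (hroots : ∀ r : ℝ, 0 < r →
      r ^ 2 - 2 * M * r + r ^ 4 / l ^ 2 + Q ^ 2 = 0 → r = rm ∨ r = rp) :
    (∃ rblue : ℝ, rm < rblue ∧ rblue < rp ∧ ∃ c : ℝ, 0 < c ∧
      ∀ r ∈ Set.Icc rm rblue,
        c ≤ deriv (fun s : ℝ =>
              -(1 - 2 * M / s + Q ^ 2 / s ^ 2 + s ^ 2 / l ^ 2)) r) ∧
    (∃ rblue : ℝ, rm < rblue ∧ rblue < rp ∧ ∃ β : ℝ, 0 < β ∧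
      ∀ r ∈ Set.Icc rm rblue,
        1 ≤ β ^ 2 * (-(1 - 2 * M / r + Q ^ 2 / r ^ 2 + r ^ 2 / l ^ 2))
            + β * deriv (fun s : ℝ =>
                -(1 - 2 * M / s + Q ^ 2 / s ^ 2 + s ^ 2 / l ^ 2)) r
            + (2 * β / r) * (-(1 - 2 * M / r + Q ^ 2 / r ^ 2 + r ^ 2 / l ^ 2))
            - α / l ^ 2) :=
  stmt10_general M Q l α rm rp hrm hrmrp hΔm hΔp
end

section
/- Let M > 0, Q ∈ ℝ, l > 0 and suppose the quartic Δ(r) := r² − 2Mr + r⁴/l² + Q² has exactly two positive roots 0 < r_− < r_+. Then both roots are simple, with Δ'(r_−) < 0 and Δ'(r_+) > 0, and Δ has the sign structure: Δ(r) > 0 for r ∈ (0, r_−), Δ(r) < 0 for r ∈ (r_−, r_+), and Δ(r) > 0 for r > r_+. -/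
/-- In the subextremal range, both roots of `Δ` are simple (`Δ'(r₋) < 0 < Δ'(r₊)`)
and `Δ` is positive on `(0, r₋)`, negative on `(r₋, r₊)`, and positive on `(r₊, ∞)`. -/
theorem stmt11 (M Q l : ℝ) (hM : 0 < M) (hl : 0 < l)
    (rm rp : ℝ) (hrm : 0 < rm) (hrmrp : rm < rp)
    (hΔm : rm ^ 2 - 2 * M * rm + rm ^ 4 / l ^ 2 + Q ^ 2 = 0)
    (hΔp : rp ^ 2 - 2 * M * rp + rp ^ 4 / l ^ 2 + Q ^ 2 = 0)
    (hroots : ∀ r : ℝ, 0 < r →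
      r ^ 2 - 2 * M * r + r ^ 4 / l ^ 2 + Q ^ 2 = 0 → r = rm ∨ r = rp) :
    deriv (fun r : ℝ => r ^ 2 - 2 * M * r + r ^ 4 / l ^ 2 + Q ^ 2) rm < 0 ∧
    0 < deriv (fun r : ℝ => r ^ 2 - 2 * M * r + r ^ 4 / l ^ 2 + Q ^ 2) rp ∧
    (∀ r : ℝ, 0 < r → r < rm → 0 < r ^ 2 - 2 * M * r + r ^ 4 / l ^ 2 + Q ^ 2) ∧
    (∀ r : ℝ, rm < r → r < rp → r ^ 2 - 2 * M * r + r ^ 4 / l ^ 2 + Q ^ 2 < 0) ∧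
    (∀ r : ℝ, rp < r → 0 < r ^ 2 - 2 * M * r + r ^ 4 / l ^ 2 + Q ^ 2) := by
  have hl2 : (0:ℝ) < l ^ 2 := by positivity
  have hl2' : (l:ℝ) ^ 2 ≠ 0 := ne_of_gt hl2
  have hc : ∀ x : ℝ, l ^ 2 * (x / l ^ 2) = x := fun x => mul_div_cancel₀ x hl2'
  -- clear denominators in the root equations
  have hm : rm ^ 4 + l ^ 2 * rm ^ 2 - 2 * M * l ^ 2 * rm + l ^ 2 * Q ^ 2 = 0 := by
    linear_combination l ^ 2 * hΔm - hc (rm ^ 4)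
  have hp : rp ^ 4 + l ^ 2 * rp ^ 2 - 2 * M * l ^ 2 * rp + l ^ 2 * Q ^ 2 = 0 := by
    linear_combination l ^ 2 * hΔp - hc (rp ^ 4)
  have hne : rm - rp ≠ 0 := by intro h; nlinarith
  -- coefficient identities
  have key : (rm - rp) * ((rm + rp) * (rm ^ 2 + rp ^ 2 + l ^ 2) - 2 * M * l ^ 2) = 0 := by
    linear_combination hm - hp
  have hα : 2 * M * l ^ 2 = (rm + rp) * (rm ^ 2 + rp ^ 2 + l ^ 2) := by
    rcases mul_eq_zero.mp key with h | h
    · exact absurd h hne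
    · linarith
  have hβ : l ^ 2 * Q ^ 2 = rm * rp * (l ^ 2 + rm ^ 2 + rm * rp + rp ^ 2) := by
    linear_combination hm + rm * hα
  -- factorization: l² Δ(r) = (r - rm)(r - rp) q(r)
  have hfac : ∀ r : ℝ, l ^ 2 * (r ^ 2 - 2 * M * r + r ^ 4 / l ^ 2 + Q ^ 2)
      = (r - rm) * (r - rp) * (r ^ 2 + (rm + rp) * r + (l ^ 2 + rm ^ 2 + rm * rp + rp ^ 2)) := by
    intro r
    linear_combination hc (r ^ 4) - r * hα + hβ
  -- the quadratic factor is positive for r > 0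
  have hq : ∀ r : ℝ, 0 < r →
      0 < r ^ 2 + (rm + rp) * r + (l ^ 2 + rm ^ 2 + rm * rp + rp ^ 2) := by
    intro r hr; nlinarith
  -- derivative computation
  have hd : ∀ x : ℝ, deriv (fun r : ℝ => r ^ 2 - 2 * M * r + r ^ 4 / l ^ 2 + Q ^ 2) x
      = 2 * x - 2 * M + 4 * x ^ 3 / l ^ 2 := by
    intro x
    have h1 : HasDerivAt (fun r : ℝ => r ^ 2 - 2 * M * r + r ^ 4 / l ^ 2 + Q ^ 2)
        ((2 * x ^ 1 - 2 * M * 1) + 4 * x ^ 3 / l ^ 2 + 0) x := by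
      exact (((hasDerivAt_pow 2 x).sub ((hasDerivAt_id x).const_mul (2 * M))).add
        (by simpa using (hasDerivAt_pow 4 x).div_const (l ^ 2))).add (hasDerivAt_const x (Q ^ 2))
    rw [h1.deriv]; ring
  refine ⟨?_, ?_, ?_, ?_, ?_⟩
  · rw [hd]
    have h2 : l ^ 2 * (2 * rm - 2 * M + 4 * rm ^ 3 / l ^ 2)
        = (rm - rp) * (l ^ 2 + 3 * rm ^ 2 + 2 * rm * rp + rp ^ 2) := by
      linear_combination hc (4 * rm ^ 3) - hα
    have h3 : l ^ 2 * (2 * rm - 2 * M + 4 * rm ^ 3 / l ^ 2) < 0 := by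
      rw [h2]; exact mul_neg_of_neg_of_pos (by linarith) (by nlinarith)
    by_contra h
    push_neg at h
    linarith [mul_nonneg hl2.le h, h3]
  · rw [hd]
    have h2 : l ^ 2 * (2 * rp - 2 * M + 4 * rp ^ 3 / l ^ 2)
        = (rp - rm) * (l ^ 2 + 3 * rp ^ 2 + 2 * rm * rp + rm ^ 2) := by
      linear_combination hc (4 * rp ^ 3) - hα
    have h3 : 0 < l ^ 2 * (2 * rp - 2 * M + 4 * rp ^ 3 / l ^ 2) := by
      rw [h2]; exact mul_pos (by linarith) (by nlinarith)
    by_contra h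
    push_neg at h
    linarith [mul_nonpos_of_nonneg_of_nonpos hl2.le h, h3]
  · intro r hr hrlt
    have h3 : 0 < l ^ 2 * (r ^ 2 - 2 * M * r + r ^ 4 / l ^ 2 + Q ^ 2) := by
      rw [hfac r]
      have : (r - rm) * (r - rp) = (rm - r) * (rp - r) := by ring
      rw [this]
      exact mul_pos (mul_pos (by linarith) (by linarith)) (hq r hr)
    by_contra h
    push_neg at h
    linarith [mul_nonpos_of_nonneg_of_nonpos hl2.le h, h3]
  · intro r h1 h2
    have hr : 0 < r := lt_trans hrm h1
    have h3 : l ^ 2 * (r ^ 2 - 2 * M * r + r ^ 4 / l ^ 2 + Q ^ 2) < 0 := by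
      rw [hfac r]
      have hlt : (r - rm) * (r - rp) < 0 :=
        mul_neg_of_pos_of_neg (by linarith) (by linarith)
      exact mul_neg_of_neg_of_pos hlt (hq r hr)
    by_contra h
    push_neg at h
    linarith [mul_nonneg hl2.le h, h3]
  · intro r h1
    have hr : 0 < r := lt_trans (lt_trans hrm hrmrp) h1
    have h3 : 0 < l ^ 2 * (r ^ 2 - 2 * M * r + r ^ 4 / l ^ 2 + Q ^ 2) := by
      rw [hfac r]
      exact mul_pos (mul_pos (by linarith) (by linarith)) (hq r hr)
    by_contra h
    push_neg at h
    linarith [mul_nonpos_of_nonneg_of_nonpos hl2.le h, h3]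
end
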